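/- arXiv:math/0602259 — 3 statements merged into one kernel-verified Lean document; each statement's English description precedes it below -/
import Mathlib

section
/- In a cluster pattern of geometric type, the elements ŷ_{j;w} = ∏_{i=1}^m x_{i;w}^{b^w_{ij}} form a Y-pattern in the ambient field: for every sequence w, every k ∈ {1,…,n}, and w' = w·k, one has ŷ_{k;w'} = ŷ_{k;w}^{−1}, and ŷ_{j;w'} = ŷ_{j;w} · ŷ_{k;w}^{[b^w_{kj}]₊} · (ŷ_{k;w} + 1)^{−b^w_{kj}} for every j ≠ k. -/
/-!
Statement 1 (Fomin–Zelevinsky, "Cluster algebras IV", Proposition 3.9):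
In a cluster pattern of geometric type, the elements
`ŷ_{j;w} = ∏_{i=1}^m x_{i;w}^{b^w_{ij}}` form a `Y`-pattern in the ambient field.
-/

open scoped BigOperators

noncomputable section

/-- The ambient field `ℚ(x₁,…,x_m)`. -/
abbrev GField (m : ℕ) : Type := FractionRing (MvPolynomial (Fin m) ℚ)

/-- The variable `xᵢ`. -/
def gx (m : ℕ) (i : Fin m) : GField m :=
  algebraMap (MvPolynomial (Fin m) ℚ) (GField m) (MvPolynomial.X i)

/-- Mutation of the rectangular `m × n` extended exchange matrix in direction `k`. -/
def matMutG {m n : ℕ} (hmn : n ≤ m) (B : Matrix (Fin m) (Fin n) ℤ) (k : Fin n) :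
    Matrix (Fin m) (Fin n) ℤ :=
  Matrix.of fun i j =>
    if i = Fin.castLE hmn k ∨ j = k then -B i j
    else B i j + Int.sign (B i k) * max (B i k * B (Fin.castLE hmn k) j) 0

/-- The extended tuple `(x_{1;w},…,x_{m;w})`: the cluster variables followed by the
frozen variables `x_{n+1},…,x_m`. -/
def xext {m n : ℕ} (X : Fin n → GField m) (i : Fin m) : GField m :=
  if h : (i : ℕ) < n then X ⟨i, h⟩ else gx m i

/-- One exchange (mutation) step for the cluster variables (geometric type). -/
def XstepG {m n : ℕ} (B : Matrix (Fin m) (Fin n) ℤ)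
    (X : Fin n → GField m) (k : Fin n) : Fin n → GField m :=
  fun l =>
    if l = k then
      ((∏ i, xext X i ^ (B i k).toNat) + ∏ i, xext X i ^ (-(B i k)).toNat) / X k
    else X l

/-- The labeled seed attached to the mutation sequence `w`. -/
def seedG {m n : ℕ} (hmn : n ≤ m) (B0 : Matrix (Fin m) (Fin n) ℤ) (w : List (Fin n)) :
    Matrix (Fin m) (Fin n) ℤ × (Fin n → GField m) :=
  w.foldl (fun p k => (matMutG hmn p.1 k, XstepG p.1 p.2 k))
    (B0, fun l => gx m (Fin.castLE hmn l))

/-- The extended exchange matrix `B̃_w`. -/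
def BmatG {m n : ℕ} (hmn : n ≤ m) (B0 : Matrix (Fin m) (Fin n) ℤ) (w : List (Fin n)) :
    Matrix (Fin m) (Fin n) ℤ := (seedG hmn B0 w).1

/-- The cluster variable `x_{ℓ;w}`. -/
def XvarG {m n : ℕ} (hmn : n ≤ m) (B0 : Matrix (Fin m) (Fin n) ℤ) (w : List (Fin n)) :
    Fin n → GField m := (seedG hmn B0 w).2

/-- `ŷ_{j;w} = ∏_{i=1}^m x_{i;w}^{b^w_{ij}}`. -/
def yhatG {m n : ℕ} (hmn : n ≤ m) (B0 : Matrix (Fin m) (Fin n) ℤ) (w : List (Fin n))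
    (j : Fin n) : GField m :=
  ∏ i, xext (XvarG hmn B0 w) i ^ (BmatG hmn B0 w i j)

/-!
Write `ŷ_j` as the Laurent monomial `x^{b_j}` in the extended cluster, `b_j` the `j`-th column of
`B̃`. With `P = ∏ x_i^{[b_ik]₊}` and `N = ∏ x_i^{[-b_ik]₊}` one has `ŷ_k = P / N`, and the exchange
relation is `x_k x_k' = P + N`. Skew-symmetrizability survives mutation, so `b_kk = 0`: the column
`b_k` does not see `x_k`, whence `ŷ_k' = ŷ_k⁻¹`. For `j ≠ k` the mutated column is
`b_j + [b_kj]₊ [b_k]₊ - [-b_kj]₊ [-b_k]₊` off row `k` and `-b_kj` in row `k`, so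
`ŷ_j' = ŷ_j P^{[b_kj]₊} N^{-[-b_kj]₊} (P + N)^{-b_kj}`, which is the `Y`-mutation rule.

The exchange relation divides by `x_k`, so the cluster variables must be nonzero. They are
subtraction-free expressions in `x₁, …, x_m`, hence quotients of polynomials that are positive
at `(1, …, 1)`.
-/

lemma Int.sign_mul_max_mul_zero (a b : ℤ) :
    a.sign * max (a * b) 0 = a.toNat * b.toNat - (-a).toNat * (-b).toNat := by
  simp only [Int.toNat_eq_max, max_def]
  rcases lt_trichotomy a 0 with ha | rfl | ha
  · rw [Int.sign_eq_neg_one_of_neg ha]; split_ifs <;> nlinarith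
  · simp
  · rw [Int.sign_eq_one_of_pos ha]; split_ifs <;> nlinarith

lemma Int.two_mul_sign_mul_max_mul_zero (a b : ℤ) :
    2 * (a.sign * max (a * b) 0) = |a| * b + a * |b| := by
  simp only [abs_eq_max_neg, max_def]
  rcases lt_trichotomy a 0 with ha | rfl | ha
  · rw [Int.sign_eq_neg_one_of_neg ha]; split_ifs <;> nlinarith
  · simp
  · rw [Int.sign_eq_one_of_pos ha]; split_ifs <;> nlinarith

def IsSkewSymmetrizer {m n : ℕ} (hmn : n ≤ m) (d : Fin n → ℤ) (B : Matrix (Fin m) (Fin n) ℤ) :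
    Prop :=
  ∀ i j : Fin n, d i * B (Fin.castLE hmn i) j = -(d j * B (Fin.castLE hmn j) i)

namespace IsSkewSymmetrizer

variable {m n : ℕ} {hmn : n ≤ m} {d : Fin n → ℤ} {B : Matrix (Fin m) (Fin n) ℤ}

lemma apply_self_eq_zero (h : IsSkewSymmetrizer hmn d B) {k : Fin n} (hk : 0 < d k) :
    B (Fin.castLE hmn k) k = 0 := by
  have : d k * B (Fin.castLE hmn k) k = 0 := by linarith [h k k]
  exact (mul_eq_zero.mp this).resolve_left hk.ne'

lemma mul_abs_eq (h : IsSkewSymmetrizer hmn d B) (hd : ∀ i, 0 < d i) (i j : Fin n) :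
    d i * |B (Fin.castLE hmn i) j| = d j * |B (Fin.castLE hmn j) i| := by
  have := congrArg abs (h i j)
  rwa [abs_neg, abs_mul, abs_mul, abs_of_pos (hd i), abs_of_pos (hd j)] at this

/- With `2 sgn(a) [a b]₊ = |a| b + a |b|`, the correction term of `d_i b'_{ij}` becomes
antisymmetric in `i, j` once `d_i b_{ik}` and `d_i |b_{ik}|` are traded for `-d_k b_{ki}` and
`d_k |b_{ki}|`. -/
lemma matMutG (h : IsSkewSymmetrizer hmn d B) (hd : ∀ i, 0 < d i) (k : Fin n) :
    IsSkewSymmetrizer hmn d (matMutG hmn B k) := by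
  intro i j
  have hinj := Fin.castLE_injective hmn
  by_cases hik : i = k
  · subst hik; simp only [_root_.matMutG, Matrix.of_apply, true_or, or_true, if_true]
    linarith [h i j]
  by_cases hjk : j = k
  · subst hjk; simp only [_root_.matMutG, Matrix.of_apply, true_or, or_true, if_true]
    linarith [h i j]
  simp only [_root_.matMutG, Matrix.of_apply, hinj.eq_iff, hik, hjk, or_self, if_false]
  have hi := Int.two_mul_sign_mul_max_mul_zero (B (Fin.castLE hmn i) k) (B (Fin.castLE hmn k) j)
  have hj := Int.two_mul_sign_mul_max_mul_zero (B (Fin.castLE hmn j) k) (B (Fin.castLE hmn k) i)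
  refine mul_left_cancel₀ (two_ne_zero (α := ℤ)) ?_
  linear_combination 2 * h i j + d i * hi + d j * hj
    + B (Fin.castLE hmn k) j * h.mul_abs_eq hd i k + |B (Fin.castLE hmn k) j| * h i k
    + B (Fin.castLE hmn k) i * h.mul_abs_eq hd j k + |B (Fin.castLE hmn k) i| * h j k

end IsSkewSymmetrizer

section PosRatios

variable {R K S : Type*} [CommRing R] [Field K] [Algebra R K] [CommRing S] [PartialOrder S]

lemma algebraMap_ne_zero_of_pos [FaithfulSMul R K] {φ : R →+* S} {a : R} (ha : 0 < φ a) :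
    algebraMap R K a ≠ 0 := by
  rw [(FaithfulSMul.algebraMap_injective R K).ne_iff' (map_zero _)]
  rintro rfl
  exact (map_zero φ ▸ ha).false

variable [IsStrictOrderedRing S] (φ : R →+* S)

def posRatios : Submonoid K where
  carrier := {x | ∃ a b : R, 0 < φ a ∧ 0 < φ b ∧ x = algebraMap R K a / algebraMap R K b}
  mul_mem' := by
    rintro _ _ ⟨a, b, ha, hb, rfl⟩ ⟨c, e, hc, he, rfl⟩
    exact ⟨a * c, b * e, by simpa using mul_pos ha hc, by simpa using mul_pos hb he,
      by rw [map_mul, map_mul, div_mul_div_comm]⟩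
  one_mem' := ⟨1, 1, by simp, by simp, by simp⟩

variable {φ}

lemma ne_zero_of_mem_posRatios [FaithfulSMul R K] {x : K} (hx : x ∈ posRatios φ) : x ≠ 0 := by
  obtain ⟨a, b, ha, hb, rfl⟩ := hx
  exact div_ne_zero (algebraMap_ne_zero_of_pos ha) (algebraMap_ne_zero_of_pos hb)

lemma inv_mem_posRatios {x : K} (hx : x ∈ posRatios φ) : x⁻¹ ∈ posRatios φ := by
  obtain ⟨a, b, ha, hb, rfl⟩ := hx
  exact ⟨b, a, hb, ha, inv_div _ _⟩

lemma add_mem_posRatios [FaithfulSMul R K] {x y : K} (hx : x ∈ posRatios φ)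
    (hy : y ∈ posRatios φ) : x + y ∈ posRatios φ := by
  obtain ⟨a, b, ha, hb, rfl⟩ := hx
  obtain ⟨c, e, hc, he, rfl⟩ := hy
  refine ⟨a * e + b * c, b * e, ?_, by simpa using mul_pos hb he, ?_⟩
  · simpa using add_pos (mul_pos ha he) (mul_pos hb hc)
  · rw [div_add_div _ _ (algebraMap_ne_zero_of_pos hb) (algebraMap_ne_zero_of_pos he)]
    simp only [map_add, map_mul]

end PosRatios

section LaurentMonomial

variable {ι K : Type*} [Fintype ι] [CommGroupWithZero K]

def laurentMonomial (x : ι → K) (v : ι → ℤ) : K := ∏ i, x i ^ v i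

lemma laurentMonomial_add {x : ι → K} (hx : ∀ i, x i ≠ 0) (v v' : ι → ℤ) :
    laurentMonomial x (v + v') = laurentMonomial x v * laurentMonomial x v' := by
  simp only [laurentMonomial, Pi.add_apply, zpow_add₀ (hx _), Finset.prod_mul_distrib]

lemma laurentMonomial_neg (x : ι → K) (v : ι → ℤ) :
    laurentMonomial x (-v) = (laurentMonomial x v)⁻¹ := by
  simp only [laurentMonomial, Pi.neg_apply, zpow_neg, Finset.prod_inv_distrib]

lemma laurentMonomial_sub {x : ι → K} (hx : ∀ i, x i ≠ 0) (v v' : ι → ℤ) :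
    laurentMonomial x (v - v') = laurentMonomial x v / laurentMonomial x v' := by
  rw [sub_eq_add_neg, laurentMonomial_add hx, laurentMonomial_neg, div_eq_mul_inv]

lemma laurentMonomial_nsmul (x : ι → K) (c : ℕ) (v : ι → ℤ) :
    laurentMonomial x (c • v) = laurentMonomial x v ^ c := by
  simp only [laurentMonomial, Pi.smul_apply, nsmul_eq_mul, mul_comm (c : ℤ), zpow_mul,
    zpow_natCast, Finset.prod_pow]

lemma laurentMonomial_natCast (x : ι → K) (v : ι → ℕ) :
    laurentMonomial x (fun i => (v i : ℤ)) = ∏ i, x i ^ v i := by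
  simp only [laurentMonomial, zpow_natCast]

variable [DecidableEq ι]

lemma laurentMonomial_update_base {x : ι → K} {k : ι} (hk : x k ≠ 0) (a : K) (v : ι → ℤ) :
    laurentMonomial (Function.update x k a) v = laurentMonomial x v * (a / x k) ^ v k := by
  simp only [laurentMonomial, Fintype.prod_eq_mul_prod_compl k, Function.update_self]
  rw [Finset.prod_congr rfl fun i hi => by
    rw [Function.update_of_ne (Finset.mem_compl.mp hi ∘ Finset.mem_singleton.mpr)]]
  rw [div_zpow]
  field_simp

lemma laurentMonomial_update_exponent {x : ι → K} {k : ι} (hk : x k ≠ 0) (v : ι → ℤ) (e : ℤ) :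
    laurentMonomial x (Function.update v k e) = laurentMonomial x v * x k ^ (e - v k) := by
  simp only [laurentMonomial, Fintype.prod_eq_mul_prod_compl k, Function.update_self]
  rw [Finset.prod_congr rfl fun i hi => by
    rw [Function.update_of_ne (Finset.mem_compl.mp hi ∘ Finset.mem_singleton.mpr)]]
  rw [zpow_sub₀ hk]
  field_simp

end LaurentMonomial

section Seeds

variable {m n : ℕ} (hmn : n ≤ m)

lemma seedG_append_singleton (B0 : Matrix (Fin m) (Fin n) ℤ) (w : List (Fin n)) (k : Fin n) :
    seedG hmn B0 (w ++ [k]) =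
      (matMutG hmn (BmatG hmn B0 w) k, XstepG (BmatG hmn B0 w) (XvarG hmn B0 w) k) := by
  rw [seedG, List.foldl_append]
  rfl

@[simp]
lemma BmatG_append_singleton (B0 : Matrix (Fin m) (Fin n) ℤ) (w : List (Fin n)) (k : Fin n) :
    BmatG hmn B0 (w ++ [k]) = matMutG hmn (BmatG hmn B0 w) k := by
  rw [BmatG, seedG_append_singleton]

@[simp]
lemma XvarG_append_singleton (B0 : Matrix (Fin m) (Fin n) ℤ) (w : List (Fin n)) (k : Fin n) :
    XvarG hmn B0 (w ++ [k]) = XstepG (BmatG hmn B0 w) (XvarG hmn B0 w) k := by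
  rw [XvarG, seedG_append_singleton]

lemma yhatG_eq_laurentMonomial (B0 : Matrix (Fin m) (Fin n) ℤ) (w : List (Fin n)) (j : Fin n) :
    yhatG hmn B0 w j = laurentMonomial (xext (XvarG hmn B0 w)) fun i => BmatG hmn B0 w i j :=
  rfl

lemma xext_castLE (X : Fin n → GField m) (k : Fin n) : xext X (Fin.castLE hmn k) = X k := by
  simp [xext]

lemma xext_update (X : Fin n → GField m) (k : Fin n) (a : GField m) :
    xext (Function.update X k a) = Function.update (xext X) (Fin.castLE hmn k) a := by
  ext i
  by_cases hi : (i : ℕ) < n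
  · have : (⟨i, hi⟩ : Fin n) = k ↔ i = Fin.castLE hmn k := by simp [Fin.ext_iff]
    simp [xext, hi, Function.update_apply, this]
  · have : i ≠ Fin.castLE hmn k := fun h => hi (h ▸ k.isLt)
    simp [xext, hi, this]

lemma XstepG_eq_update (B : Matrix (Fin m) (Fin n) ℤ) (X : Fin n → GField m) (k : Fin n) :
    XstepG B X k = Function.update X k
      (((∏ i, xext X i ^ (B i k).toNat) + ∏ i, xext X i ^ (-(B i k)).toNat) / X k) := by
  ext l
  by_cases hl : l = k <;> simp [XstepG, hl]

lemma matMutG_apply_self (B : Matrix (Fin m) (Fin n) ℤ) (k : Fin n) (i : Fin m) :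
    matMutG hmn B k i k = -B i k := by
  simp [matMutG]

lemma matMutG_col_of_ne (B : Matrix (Fin m) (Fin n) ℤ) {j k : Fin n} (hj : j ≠ k) :
    (fun i => matMutG hmn B k i j) = Function.update ((fun i => B i j)
      + (B (Fin.castLE hmn k) j).toNat • (fun i => ((B i k).toNat : ℤ))
      - (-B (Fin.castLE hmn k) j).toNat • (fun i => ((-B i k).toNat : ℤ)))
      (Fin.castLE hmn k) (-B (Fin.castLE hmn k) j) := by
  ext i
  by_cases hi : i = Fin.castLE hmn k
  · subst hi; simp [matMutG]
  · simp only [matMutG, Matrix.of_apply, hi, hj, or_self, if_false, Function.update_of_ne hi,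
      Int.sign_mul_max_mul_zero, Pi.add_apply, Pi.sub_apply, Pi.smul_apply]
    simp only [nsmul_eq_mul]
    ring

end Seeds

lemma pow_toNat_div_mul_add_zpow_neg {K : Type*} [Field K] {N : K} (P : K) (hN : N ≠ 0) (c : ℤ) :
    P ^ c.toNat / N ^ (-c).toNat * (P + N) ^ (-c) = (P / N) ^ c.toNat * (P / N + 1) ^ (-c) := by
  rw [div_add_one hN]
  obtain ⟨c, rfl | rfl⟩ := Int.eq_nat_or_neg c
  · simp only [Int.toNat_natCast, Int.toNat_neg_natCast, pow_zero, div_one, zpow_neg,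
      zpow_natCast, div_pow]
    field_simp
  · simp only [Int.toNat_neg_natCast, neg_neg, Int.toNat_natCast, pow_zero, zpow_natCast, div_pow]
    field_simp

section Mutation

variable {m n : ℕ} (hmn : n ≤ m) {B : Matrix (Fin m) (Fin n) ℤ} {X : Fin n → GField m}
  {k : Fin n}

lemma laurentMonomial_col_eq_div (hX : ∀ i, xext X i ≠ 0) :
    laurentMonomial (xext X) (fun i => B i k) =
      (∏ i, xext X i ^ (B i k).toNat) / ∏ i, xext X i ^ (-(B i k)).toNat := by
  rw [← laurentMonomial_natCast, ← laurentMonomial_natCast, ← laurentMonomial_sub hX]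
  congr 1
  funext i
  exact (Int.toNat_sub_toNat_neg _).symm

lemma laurentMonomial_XstepG_self (hX : ∀ i, xext X i ≠ 0) (hkk : B (Fin.castLE hmn k) k = 0) :
    laurentMonomial (xext (XstepG B X k)) (fun i => matMutG hmn B k i k) =
      (laurentMonomial (xext X) fun i => B i k)⁻¹ := by
  rw [XstepG_eq_update, xext_update hmn, laurentMonomial_update_base (hX _)]
  simp only [matMutG_apply_self, hkk, neg_zero, zpow_zero, mul_one]
  exact laurentMonomial_neg _ _

lemma laurentMonomial_XstepG_of_ne (hX : ∀ i, xext X i ≠ 0) (hkk : B (Fin.castLE hmn k) k = 0)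
    {j : Fin n} (hj : j ≠ k) :
    laurentMonomial (xext (XstepG B X k)) (fun i => matMutG hmn B k i j) =
      laurentMonomial (xext X) (fun i => B i j)
        * laurentMonomial (xext X) (fun i => B i k) ^ (B (Fin.castLE hmn k) j).toNat
        * (laurentMonomial (xext X) (fun i => B i k) + 1) ^ (-B (Fin.castLE hmn k) j) := by
  set c := B (Fin.castLE hmn k) j
  set P := ∏ i, xext X i ^ (B i k).toNat
  set N := ∏ i, xext X i ^ (-(B i k)).toNat
  have hN : N ≠ 0 := Finset.prod_ne_zero_iff.mpr fun i _ => pow_ne_zero _ (hX i)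
  have hXk : X k ≠ 0 := xext_castLE hmn X k ▸ hX _
  have hexchange : X k ^ (-c - c) * ((P + N) / X k / X k) ^ (-c) = (P + N) ^ (-c) := by
    rw [div_div, div_zpow, sub_eq_add_neg, zpow_add₀ hXk, ← mul_zpow]
    exact mul_div_cancel₀ _ (zpow_ne_zero _ (mul_ne_zero hXk hXk))
  rw [XstepG_eq_update, xext_update hmn, matMutG_col_of_ne hmn B hj,
    laurentMonomial_update_base (hX _), laurentMonomial_update_exponent (hX _),
    laurentMonomial_sub hX, laurentMonomial_add hX, laurentMonomial_nsmul, laurentMonomial_nsmul,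
    laurentMonomial_natCast, laurentMonomial_natCast, laurentMonomial_col_eq_div (k := k) hX,
    xext_castLE]
  simp only [Function.update_self, Pi.add_apply, Pi.sub_apply, Pi.smul_apply, hkk, neg_zero,
    Int.toNat_zero, Nat.cast_zero, smul_zero, add_zero, sub_zero]
  rw [mul_assoc, hexchange, mul_div_assoc, mul_assoc, pow_toNat_div_mul_add_zpow_neg P hN,
    ← mul_assoc]

end Mutation

section Invariants

variable {m n : ℕ} (hmn : n ≤ m) (B0 : Matrix (Fin m) (Fin n) ℤ)

lemma isSkewSymmetrizer_BmatG {d : Fin n → ℤ} (hd : ∀ i, 0 < d i)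
    (hskew : IsSkewSymmetrizer hmn d B0) (w : List (Fin n)) :
    IsSkewSymmetrizer hmn d (BmatG hmn B0 w) := by
  induction w using List.reverseRecOn with
  | nil => exact hskew
  | append_singleton w k ih => simpa using ih.matMutG hd k

lemma xext_mem {S : Submonoid (GField m)} {X : Fin n → GField m} (hX : ∀ l, X l ∈ S)
    (hgx : ∀ i, gx m i ∈ S) (i : Fin m) : xext X i ∈ S := by
  unfold xext
  split
  exacts [hX _, hgx i]

lemma gx_mem_posRatios (i : Fin m) : gx m i ∈ posRatios (MvPolynomial.eval (1 : Fin m → ℚ)) :=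
  ⟨MvPolynomial.X i, 1, by simp, by simp, by simp [gx]⟩

lemma XvarG_mem_posRatios (w : List (Fin n)) (l : Fin n) :
    XvarG hmn B0 w l ∈ posRatios (MvPolynomial.eval (1 : Fin m → ℚ)) := by
  induction w using List.reverseRecOn generalizing l with
  | nil => exact gx_mem_posRatios _
  | append_singleton w k ih =>
    have hx := xext_mem ih gx_mem_posRatios
    rw [XvarG_append_singleton, XstepG_eq_update]
    by_cases hl : l = k
    · subst hl
      rw [Function.update_self, div_eq_mul_inv]
      refine Submonoid.mul_mem _ (add_mem_posRatios ?_ ?_) (inv_mem_posRatios (ih l)) <;>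
        exact Submonoid.prod_mem _ fun i _ => Submonoid.pow_mem _ (hx i) _
    · rw [Function.update_of_ne hl]
      exact ih l

lemma xext_XvarG_ne_zero (w : List (Fin n)) (i : Fin m) : xext (XvarG hmn B0 w) i ≠ 0 :=
  ne_zero_of_mem_posRatios (xext_mem (XvarG_mem_posRatios hmn B0 w) gx_mem_posRatios i)

end Invariants

theorem yhat_is_Y_pattern_general (m n : ℕ) (hmn : n ≤ m)
    (B0 : Matrix (Fin m) (Fin n) ℤ)
    (d : Fin n → ℤ) (hd : ∀ i, 0 < d i)
    (hskew : ∀ i j : Fin n,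
      d i * B0 (Fin.castLE hmn i) j = -(d j * B0 (Fin.castLE hmn j) i)) :
    ∀ (w : List (Fin n)) (k : Fin n),
      yhatG hmn B0 (w ++ [k]) k = (yhatG hmn B0 w k)⁻¹ ∧
      ∀ j : Fin n, j ≠ k →
        yhatG hmn B0 (w ++ [k]) j =
          yhatG hmn B0 w j * yhatG hmn B0 w k ^ (BmatG hmn B0 w (Fin.castLE hmn k) j).toNat
            * (yhatG hmn B0 w k + 1) ^ (-(BmatG hmn B0 w (Fin.castLE hmn k) j)) := by
  intro w k
  have hX := xext_XvarG_ne_zero hmn B0 w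
  have hkk := (isSkewSymmetrizer_BmatG hmn B0 hd hskew w).apply_self_eq_zero (hd k)
  simp only [yhatG_eq_laurentMonomial, BmatG_append_singleton, XvarG_append_singleton]
  exact ⟨laurentMonomial_XstepG_self hmn hX hkk,
    fun j hj => laurentMonomial_XstepG_of_ne hmn hX hkk hj⟩

/-- The elements `ŷ_{j;w}` form a `Y`-pattern: mutation in
direction `k` transforms them by the `Y`-seed mutation rule. -/
theorem yhat_is_Y_pattern (m n : ℕ) (hn : 1 ≤ n) (hmn : n ≤ m)
    (B0 : Matrix (Fin m) (Fin n) ℤ)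
    (d : Fin n → ℤ) (hd : ∀ i, 0 < d i)
    (hskew : ∀ i j : Fin n,
      d i * B0 (Fin.castLE hmn i) j = -(d j * B0 (Fin.castLE hmn j) i)) :
    ∀ (w : List (Fin n)) (k : Fin n),
      yhatG hmn B0 (w ++ [k]) k = (yhatG hmn B0 w k)⁻¹ ∧
      ∀ j : Fin n, j ≠ k →
        yhatG hmn B0 (w ++ [k]) j =
          yhatG hmn B0 w j * yhatG hmn B0 w k ^ (BmatG hmn B0 w (Fin.castLE hmn k) j).toNat
            * (yhatG hmn B0 w k + 1) ^ (-(BmatG hmn B0 w (Fin.castLE hmn k) j)) :=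
  yhat_is_Y_pattern_general m n hmn B0 d hd hskew
end
end

section
/- For every finite sequence w and every ℓ ∈ {1,…,n}, there exists a unique vector g = (g₁,…,gₙ) ∈ ℤⁿ such that X_{ℓ;w}(x₁,…,xₙ; y₁,…,yₙ) = x₁^{g₁} ⋯ xₙ^{gₙ} · F_{ℓ;w}(ŷ₁,…,ŷₙ), where ŷ_j = y_j · ∏_{i=1}^n x_i^{b⁰_{ij}} ∈ ℚ(x₁,…,xₙ,y₁,…,yₙ). Equivalently, every X_{ℓ;w} is homogeneous with respect to the ℤⁿ-grading of ℤ[x₁^{±1},…,xₙ^{±1}; y₁,…,yₙ] determined by deg(x_i) = α_i and deg(y_j) = −∑_{i=1}^n b⁰_{ij} α_i (where α₁,…,αₙ is the standard basis of ℤⁿ), and g is its degree (the g-vector g_{ℓ;w}). -/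
/-! Statement 6 (Fomin–Zelevinsky, "Cluster algebras IV", Proposition 6.1 and
Corollary 6.3): every cluster variable with principal coefficients is homogeneous;
equivalently X_{ℓ;w} = x^g · F_{ℓ;w}(ŷ₁,…,ŷₙ) for a unique g ∈ ℤⁿ (the g-vector). -/
open scoped BigOperators

noncomputable section

/-- The ambient field `ℚ(x₁,…,xₙ,y₁,…,yₙ)`; the `x`-variables are indexed by
`Sum.inl`, the `y`-variables by `Sum.inr`. -/
abbrev ClusterField (n : ℕ) : Type :=
  FractionRing (MvPolynomial (Fin n ⊕ Fin n) ℚ)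

/-- The variable `xᵢ` in the ambient field. -/
def xv (n : ℕ) (i : Fin n) : ClusterField n :=
  algebraMap (MvPolynomial (Fin n ⊕ Fin n) ℚ) (ClusterField n) (MvPolynomial.X (Sum.inl i))

/-- The variable `yⱼ` in the ambient field. -/
def yvF (n : ℕ) (j : Fin n) : ClusterField n :=
  algebraMap (MvPolynomial (Fin n ⊕ Fin n) ℚ) (ClusterField n) (MvPolynomial.X (Sum.inr j))

/-- The initial `2n × n` extended exchange matrix: top part `B⁰`, bottom part the identity. -/
def initB {n : ℕ} (B0 : Matrix (Fin n) (Fin n) ℤ) :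
    Matrix (Fin n ⊕ Fin n) (Fin n) ℤ :=
  Matrix.of fun i j =>
    match i with
    | Sum.inl i' => B0 i' j
    | Sum.inr i' => if i' = j then 1 else 0

/-- Mutation of the `2n × n` extended exchange matrix in direction `k`. -/
def matMut {n : ℕ} (B : Matrix (Fin n ⊕ Fin n) (Fin n) ℤ) (k : Fin n) :
    Matrix (Fin n ⊕ Fin n) (Fin n) ℤ :=
  Matrix.of fun i j =>
    if i = Sum.inl k ∨ j = k then -B i j
    else B i j + Int.sign (B i k) * max (B i k * B (Sum.inl k) j) 0

/-- One exchange (mutation) step for the cluster variables, with principal coefficients. -/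
def Xstep {n : ℕ} (B : Matrix (Fin n ⊕ Fin n) (Fin n) ℤ)
    (X : Fin n → ClusterField n) (k : Fin n) : Fin n → ClusterField n :=
  fun l =>
    if l = k then
      ((∏ j, yvF n j ^ (B (Sum.inr j) k).toNat) * (∏ i, X i ^ (B (Sum.inl i) k).toNat)
          + (∏ j, yvF n j ^ (-(B (Sum.inr j) k)).toNat) *
              (∏ i, X i ^ (-(B (Sum.inl i) k)).toNat)) / X k
    else X l

/-- The labeled seed (extended matrix together with cluster) attached to the
mutation sequence `w`, for the pattern with principal coefficients. -/
def seed {n : ℕ} (B0 : Matrix (Fin n) (Fin n) ℤ) (w : List (Fin n)) :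
    Matrix (Fin n ⊕ Fin n) (Fin n) ℤ × (Fin n → ClusterField n) :=
  w.foldl (fun p k => (matMut p.1 k, Xstep p.1 p.2 k)) (initB B0, fun l => xv n l)

/-- The extended exchange matrix `B̃_w`. -/
def Bmat {n : ℕ} (B0 : Matrix (Fin n) (Fin n) ℤ) (w : List (Fin n)) :
    Matrix (Fin n ⊕ Fin n) (Fin n) ℤ := (seed B0 w).1

/-- The cluster variable `X_{ℓ;w}`. -/
def Xvar {n : ℕ} (B0 : Matrix (Fin n) (Fin n) ℤ) (w : List (Fin n)) :
    Fin n → ClusterField n := (seed B0 w).2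

/-- The field `ℚ(y₁,…,yₙ)`. -/
abbrev YField (n : ℕ) : Type := FractionRing (MvPolynomial (Fin n) ℚ)

/-- The variable `yⱼ` in `ℚ(y₁,…,yₙ)`. -/
def yv (n : ℕ) (j : Fin n) : YField n :=
  algebraMap (MvPolynomial (Fin n) ℚ) (YField n) (MvPolynomial.X j)

/-- The exchange step at `x₁ = ⋯ = xₙ = 1`: the recursion for the `F`-polynomials. -/
def Fstep {n : ℕ} (B : Matrix (Fin n ⊕ Fin n) (Fin n) ℤ)
    (F : Fin n → YField n) (k : Fin n) : Fin n → YField n :=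
  fun l =>
    if l = k then
      ((∏ j, yv n j ^ (B (Sum.inr j) k).toNat) * (∏ i, F i ^ (B (Sum.inl i) k).toNat)
          + (∏ j, yv n j ^ (-(B (Sum.inr j) k)).toNat) *
              (∏ i, F i ^ (-(B (Sum.inl i) k)).toNat)) / F k
    else F l

/-- The seed of the pattern specialized at `x₁ = ⋯ = xₙ = 1`. -/
def Fseed {n : ℕ} (B0 : Matrix (Fin n) (Fin n) ℤ) (w : List (Fin n)) :
    Matrix (Fin n ⊕ Fin n) (Fin n) ℤ × (Fin n → YField n) :=
  w.foldl (fun p k => (matMut p.1 k, Fstep p.1 p.2 k)) (initB B0, fun _ => 1)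

/-- The `F`-polynomial `F_{ℓ;w}`, i.e. the image of `X_{ℓ;w}` under the
specialization `x₁ = ⋯ = xₙ = 1`. -/
def Fpoly {n : ℕ} (B0 : Matrix (Fin n) (Fin n) ℤ) (w : List (Fin n)) :
    Fin n → YField n := (Fseed B0 w).2


/-- The element `ŷ_j = y_j ∏ᵢ x_i^{b⁰_{ij}}` of the ambient field. -/
def yhat {n : ℕ} (B0 : Matrix (Fin n) (Fin n) ℤ) (j : Fin n) : ClusterField n :=
  yvF n j * ∏ i, xv n i ^ (B0 i j)

/-- One step of the recursion computing the evaluations `F_{ℓ;w}(ŷ₁,…,ŷₙ)`: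
the `F`-polynomial recursion with `yⱼ` replaced by `ŷⱼ`. -/
def FhatStep {n : ℕ} (B0 : Matrix (Fin n) (Fin n) ℤ)
    (B : Matrix (Fin n ⊕ Fin n) (Fin n) ℤ)
    (F : Fin n → ClusterField n) (k : Fin n) : Fin n → ClusterField n :=
  fun l =>
    if l = k then
      ((∏ j, yhat B0 j ^ (B (Sum.inr j) k).toNat) * (∏ i, F i ^ (B (Sum.inl i) k).toNat)
          + (∏ j, yhat B0 j ^ (-(B (Sum.inr j) k)).toNat) *
              (∏ i, F i ^ (-(B (Sum.inl i) k)).toNat)) / F k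
    else F l

/-- The evaluation `F_{ℓ;w}(ŷ₁,…,ŷₙ) ∈ ℚ(x₁,…,xₙ,y₁,…,yₙ)` of the
`F`-polynomial at `ŷ₁,…,ŷₙ`. -/
def Fhat {n : ℕ} (B0 : Matrix (Fin n) (Fin n) ℤ) (w : List (Fin n)) :
    Fin n → ClusterField n :=
  (w.foldl (fun p k => (matMut p.1 k, FhatStep B0 p.1 p.2 k))
    (initB B0, fun _ => 1)).2

/-! Grade the ambient field by `deg xᵢ = eᵢ`, `deg yⱼ = -∑ᵢ b⁰ᵢⱼ eᵢ`, so that every `ŷⱼ` has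
degree `0`. Along `w` we keep `X_{ℓ;w} = x^{g_ℓ} · F_{ℓ;w}(ŷ)`: the exchange relation for
`X_{k;w'}` and the `F`-polynomial recursion at `ŷ` differ only by the monomials `x^{g_i}`, and they
match as long as the two monomials of every exchange binomial have the same degree. That condition
says that the matrix `[Gᵀ | -B⁰]` of degrees kills `B̃_w`; it holds for `w = ∅` and survives
mutation because the diagonal of a skew-symmetrizable matrix vanishes. The values `F_{ℓ;w}(ŷ)` are
quotients of polynomials with nonnegative coefficients, hence nonzero, and the Laurent monomial
`x^g` determines `g`, which gives uniqueness. -/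

namespace MvPolynomial

variable (σ R : Type*) [CommRing R] [IsDomain R] [PartialOrder R] [IsOrderedRing R]

def nonnegCoeffs : Subsemiring (MvPolynomial σ R) where
  carrier := {p | ∀ m, 0 ≤ p.coeff m}
  mul_mem' hp hq m := by
    classical rw [coeff_mul]; exact Finset.sum_nonneg fun x _ => mul_nonneg (hp _) (hq _)
  one_mem' m := by classical rw [coeff_one]; split_ifs <;> simp
  add_mem' hp hq m := by rw [coeff_add]; exact add_nonneg (hp m) (hq m)
  zero_mem' m := by simp

variable {σ R}

lemma X_mem_nonnegCoeffs (i : σ) : X i ∈ nonnegCoeffs σ R := fun m => by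
  classical rw [coeff_X]; split_ifs <;> simp

lemma add_ne_zero_of_mem_nonnegCoeffs {p q : MvPolynomial σ R} (hp : p ∈ nonnegCoeffs σ R)
    (hq : q ∈ nonnegCoeffs σ R) (hp0 : p ≠ 0) : p + q ≠ 0 := by
  obtain ⟨m, hm⟩ := ne_zero_iff.mp hp0
  refine ne_zero_iff.mpr ⟨m, ?_⟩
  rw [coeff_add]
  exact (add_pos_of_pos_of_nonneg (lt_of_le_of_ne (hp m) (Ne.symm hm)) (hq m)).ne'

variable (σ R)

def subtractionFree : Submonoid (FractionRing (MvPolynomial σ R)) where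
  carrier := {a | ∃ p ∈ nonnegCoeffs σ R, ∃ q ∈ nonnegCoeffs σ R, p ≠ 0 ∧ q ≠ 0 ∧
    a = algebraMap _ _ p / algebraMap _ _ q}
  one_mem' := ⟨1, one_mem _, 1, one_mem _, one_ne_zero, one_ne_zero, by simp⟩
  mul_mem' := by
    rintro _ _ ⟨p, hp, q, hq, hp0, hq0, rfl⟩ ⟨r, hr, s, hs, hr0, hs0, rfl⟩
    exact ⟨p * r, mul_mem hp hr, q * s, mul_mem hq hs, mul_ne_zero hp0 hr0,
      mul_ne_zero hq0 hs0, by rw [map_mul, map_mul, div_mul_div_comm]⟩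

variable {σ R}

namespace subtractionFree

lemma ne_zero {a : FractionRing (MvPolynomial σ R)} (ha : a ∈ subtractionFree σ R) : a ≠ 0 := by
  obtain ⟨p, -, q, -, hp0, hq0, rfl⟩ := ha
  exact div_ne_zero ((map_ne_zero_iff _ (IsFractionRing.injective _ _)).mpr hp0)
    ((map_ne_zero_iff _ (IsFractionRing.injective _ _)).mpr hq0)

lemma algebraMap_X_mem (i : σ) :
    algebraMap (MvPolynomial σ R) (FractionRing (MvPolynomial σ R)) (X i) ∈ subtractionFree σ R :=
  ⟨X i, X_mem_nonnegCoeffs i, 1, one_mem _, X_ne_zero i, one_ne_zero, by simp⟩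

lemma inv_mem {a : FractionRing (MvPolynomial σ R)} (ha : a ∈ subtractionFree σ R) :
    a⁻¹ ∈ subtractionFree σ R := by
  obtain ⟨p, hp, q, hq, hp0, hq0, rfl⟩ := ha
  exact ⟨q, hq, p, hp, hq0, hp0, by rw [inv_div]⟩

lemma add_mem {a b : FractionRing (MvPolynomial σ R)} (ha : a ∈ subtractionFree σ R)
    (hb : b ∈ subtractionFree σ R) : a + b ∈ subtractionFree σ R := by
  obtain ⟨p, hp, q, hq, hp0, hq0, rfl⟩ := ha
  obtain ⟨r, hr, s, hs, hr0, hs0, rfl⟩ := hb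
  have hinj := IsFractionRing.injective (MvPolynomial σ R) (FractionRing (MvPolynomial σ R))
  refine ⟨p * s + q * r, Subsemiring.add_mem _ (mul_mem hp hs) (mul_mem hq hr), q * s,
    mul_mem hq hs, add_ne_zero_of_mem_nonnegCoeffs (mul_mem hp hs) (mul_mem hq hr)
      (mul_ne_zero hp0 hs0), mul_ne_zero hq0 hs0, ?_⟩
  rw [div_add_div _ _ ((map_ne_zero_iff _ hinj).mpr hq0) ((map_ne_zero_iff _ hinj).mpr hs0)]
  simp only [map_add, map_mul]

lemma div_mem {a b : FractionRing (MvPolynomial σ R)} (ha : a ∈ subtractionFree σ R)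
    (hb : b ∈ subtractionFree σ R) : a / b ∈ subtractionFree σ R :=
  div_eq_mul_inv a b ▸ mul_mem ha (inv_mem hb)

lemma zpow_mem {a : FractionRing (MvPolynomial σ R)} (ha : a ∈ subtractionFree σ R) :
    ∀ e : ℤ, a ^ e ∈ subtractionFree σ R
  | .ofNat e => by rw [Int.ofNat_eq_natCast, zpow_natCast]; exact pow_mem ha e
  | .negSucc e => by rw [zpow_negSucc]; exact inv_mem (pow_mem ha _)

end subtractionFree

end MvPolynomial

section LaurentMonomial

variable {n : ℕ}

open MvPolynomial

lemma xv_mem_subtractionFree (i : Fin n) : xv n i ∈ subtractionFree (Fin n ⊕ Fin n) ℚ :=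
  subtractionFree.algebraMap_X_mem _

lemma xv_ne_zero (i : Fin n) : xv n i ≠ 0 := subtractionFree.ne_zero (xv_mem_subtractionFree i)

def xMonomial (g : Fin n → ℤ) : ClusterField n := ∏ i, xv n i ^ g i

lemma xMonomial_mem_subtractionFree (g : Fin n → ℤ) :
    xMonomial g ∈ subtractionFree (Fin n ⊕ Fin n) ℚ :=
  prod_mem fun i _ => subtractionFree.zpow_mem (xv_mem_subtractionFree i) _

lemma xMonomial_ne_zero (g : Fin n → ℤ) : xMonomial g ≠ 0 :=
  subtractionFree.ne_zero (xMonomial_mem_subtractionFree g)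

@[simp]
lemma xMonomial_zero : xMonomial (0 : Fin n → ℤ) = 1 := by simp [xMonomial]

lemma xMonomial_add (g h : Fin n → ℤ) : xMonomial (g + h) = xMonomial g * xMonomial h := by
  simp only [xMonomial, Pi.add_apply, ← Finset.prod_mul_distrib, zpow_add₀ (xv_ne_zero _)]

lemma xMonomial_sub (g h : Fin n → ℤ) : xMonomial (g - h) = xMonomial g / xMonomial h := by
  simp only [xMonomial, Pi.sub_apply, ← Finset.prod_div_distrib, zpow_sub₀ (xv_ne_zero _)]

lemma xMonomial_nsmul (e : ℕ) (g : Fin n → ℤ) : xMonomial (e • g) = xMonomial g ^ e := by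
  simp only [xMonomial, Pi.smul_apply, ← Finset.prod_pow, nsmul_eq_mul, mul_comm (e : ℤ),
    zpow_mul, zpow_natCast]

lemma xMonomial_sum {ι : Type*} (s : Finset ι) (f : ι → Fin n → ℤ) :
    xMonomial (∑ i ∈ s, f i) = ∏ i ∈ s, xMonomial (f i) := by
  classical
  induction s using Finset.induction_on with
  | empty => simp
  | insert a s ha ih => rw [Finset.sum_insert ha, Finset.prod_insert ha, xMonomial_add, ih]

lemma xMonomial_natCast (f : Fin n → ℕ) :
    xMonomial (fun i => (f i : ℤ)) = algebraMap (MvPolynomial (Fin n ⊕ Fin n) ℚ) (ClusterField n)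
      (monomial (∑ i, Finsupp.single (Sum.inl i) (f i)) 1) := by
  simp only [xMonomial, zpow_natCast, xv, ← map_pow, ← map_prod, X_pow_eq_monomial,
    monomial_sum_one]

lemma xMonomial_natCast_injective {f f' : Fin n → ℕ}
    (h : xMonomial (fun i => (f i : ℤ)) = xMonomial (fun i => (f' i : ℤ))) : f = f' := by
  rw [xMonomial_natCast, xMonomial_natCast] at h
  have := monomial_left_injective one_ne_zero (IsFractionRing.injective _ _ h)
  funext i
  simpa [Finsupp.finsetSum_apply, Finsupp.single_apply] using
    DFunLike.congr_fun this (Sum.inl i)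

lemma xMonomial_injective : Function.Injective (xMonomial (n := n)) := by
  intro g h hgh
  have hsplit :
      g - h = (fun i => (((g - h) i).toNat : ℤ)) - fun i => ((-(g - h) i).toNat : ℤ) :=
    funext fun i => (Int.toNat_sub_toNat_neg _).symm
  have h1 : xMonomial (g - h) = 1 := by rw [xMonomial_sub, hgh, div_self (xMonomial_ne_zero h)]
  rw [hsplit, xMonomial_sub, div_eq_one_iff_eq (xMonomial_ne_zero _)] at h1
  funext i
  have := congrFun (xMonomial_natCast_injective h1) i
  simp only [Pi.sub_apply] at this
  omega

end LaurentMonomial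

section MatrixMutation

open Matrix

variable {n : ℕ} {B : Matrix (Fin n ⊕ Fin n) (Fin n) ℤ} {k : Fin n}

lemma matMut_apply_of_eq {i : Fin n ⊕ Fin n} {j : Fin n} (h : i = Sum.inl k ∨ j = k) :
    matMut B k i j = -B i j := by
  rw [matMut, Matrix.of_apply, if_pos h]

lemma matMut_apply_of_ne {i : Fin n ⊕ Fin n} {j : Fin n} (hi : i ≠ Sum.inl k) (hj : j ≠ k) :
    matMut B k i j = B i j + (B i k).toNat * (B (Sum.inl k) j).toNat
      - (-B i k).toNat * (-B (Sum.inl k) j).toNat := by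
  rw [matMut, Matrix.of_apply, if_neg (by tauto), Int.sign_mul_max_mul_zero]; ring

def SkewSymmetrizedBy (d : Fin n → ℤ) (B : Matrix (Fin n ⊕ Fin n) (Fin n) ℤ) : Prop :=
  ∀ i j, d i * B (Sum.inl i) j = -(d j * B (Sum.inl j) i)

namespace SkewSymmetrizedBy

variable {d : Fin n → ℤ}

lemma apply_self (hs : SkewSymmetrizedBy d B) (hd : d k ≠ 0) : B (Sum.inl k) k = 0 := by
  have := hs k k
  simpa [hd] using (show d k * B (Sum.inl k) k = 0 by linarith)

lemma mul_toNat (hs : SkewSymmetrizedBy d B) {i j : Fin n} (hi : 0 ≤ d i) (hj : 0 ≤ d j) :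
    d i * (B (Sum.inl i) j).toNat = d j * (-B (Sum.inl j) i).toNat := by
  have hpos {c x : ℤ} (hc : 0 ≤ c) : c * x.toNat = (c * x).toNat := by
    simp only [Int.toNat_eq_max, mul_max_of_nonneg _ _ hc, mul_zero]
  rw [hpos hi, hpos hj, hs i j, mul_neg]

lemma matMut (hs : SkewSymmetrizedBy d B) (hd : ∀ i, 0 < d i) (k : Fin n) :
    SkewSymmetrizedBy d (matMut B k) := by
  intro i j
  by_cases hik : i = k
  · subst hik
    rw [matMut_apply_of_eq (Or.inl rfl), matMut_apply_of_eq (Or.inr rfl), mul_neg, mul_neg, hs i j]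
  by_cases hjk : j = k
  · subst hjk
    rw [matMut_apply_of_eq (Or.inr rfl), matMut_apply_of_eq (Or.inl rfl), mul_neg, mul_neg, hs i j]
  rw [matMut_apply_of_ne (by simpa using hik) hjk, matMut_apply_of_ne (by simpa using hjk) hik]
  have hnn (i : Fin n) : 0 ≤ d i := (hd i).le
  have hik := hs.mul_toNat (hnn i) (hnn k)
  have hki := hs.mul_toNat (hnn k) (hnn i)
  have hkj := hs.mul_toNat (hnn k) (hnn j)
  have hjk := hs.mul_toNat (hnn j) (hnn k)
  refine mul_left_cancel₀ (hd k).ne' ?_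
  linear_combination d k * hs i j + d k * (B (Sum.inl k) j).toNat * hik
    + d k * (-B (Sum.inl k) i).toNat * hkj + d k * (-B (Sum.inl k) j).toNat * hki
    + d k * (B (Sum.inl k) i).toNat * hjk

end SkewSymmetrizedBy

lemma mulVec_toNat_neg_eq {ι : Type*} {W : Matrix ι (Fin n ⊕ Fin n) ℤ} (hW : W * B = 0)
    (k : Fin n) :
    W *ᵥ (fun r => ((-B r k).toNat : ℤ)) = W *ᵥ fun r => ((B r k).toNat : ℤ) := by
  rw [eq_comm, ← sub_eq_zero, ← mulVec_sub]
  ext m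
  simpa [mulVec, dotProduct, Int.toNat_sub_toNat_neg, ← mul_apply] using
    congrFun (congrFun hW m) k

lemma updateCol_mul_matMut_eq_zero {ι : Type*} {W : Matrix ι (Fin n ⊕ Fin n) ℤ}
    (hkk : B (Sum.inl k) k = 0) (hW : W * B = 0) :
    W.updateCol (Sum.inl k) (W *ᵥ (fun r => ((B r k).toNat : ℤ)) - fun m => W m (Sum.inl k))
      * matMut B k = 0 := by
  ext m j
  have hWB (j : Fin n) : ∑ r, W m r * B r j = 0 := by
    simpa [Matrix.mul_apply] using congrFun (congrFun hW m) j
  have hD := congrFun (mulVec_toNat_neg_eq hW k) m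
  simp only [mul_apply, updateCol_apply, Pi.sub_apply, mulVec, dotProduct,
    Matrix.zero_apply] at hD ⊢
  set D := ∑ r, W m r * ((B r k).toNat : ℤ)
  by_cases hjk : j = k
  · subst hjk
    have hterm (r : Fin n ⊕ Fin n) : (if r = Sum.inl j then D - W m (Sum.inl j) else W m r)
        * matMut B j r j = -(W m r * B r j) := by
      rw [matMut_apply_of_eq (Or.inr rfl)]
      split_ifs with hr
      · subst hr; simp [hkk]
      · ring
    rw [Finset.sum_congr rfl fun r _ => hterm r, Finset.sum_neg_distrib, hWB, neg_zero]
  · have hterm (r : Fin n ⊕ Fin n) : (if r = Sum.inl k then D - W m (Sum.inl k) else W m r)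
        * matMut B k r j = W m r * B r j + (B (Sum.inl k) j).toNat * (W m r * (B r k).toNat)
          - (-B (Sum.inl k) j).toNat * (W m r * (-B r k).toNat)
          - if r = Sum.inl k then D * B (Sum.inl k) j else 0 := by
      split_ifs with hr
      · subst hr
        rw [matMut_apply_of_eq (Or.inl rfl), hkk, neg_zero, Int.toNat_zero, Nat.cast_zero]
        ring
      · rw [matMut_apply_of_ne hr hjk]; ring
    rw [Finset.sum_congr rfl fun r _ => hterm r]
    simp only [Finset.sum_sub_distrib, Finset.sum_add_distrib, ← Finset.mul_sum,
      Finset.sum_ite_eq', Finset.mem_univ, if_true, hWB, hD]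
    linear_combination D * Int.toNat_sub_toNat_neg (B (Sum.inl k) j)

end MatrixMutation

section GVectors

open Matrix MvPolynomial

variable {n : ℕ} {B0 G : Matrix (Fin n) (Fin n) ℤ} {B : Matrix (Fin n ⊕ Fin n) (Fin n) ℤ}
  {X H : Fin n → ClusterField n} {k : Fin n}

/-- Column `inl i` is the degree `G i` of `Xᵢ`, column `inr j` the degree of `yⱼ`, in the grading
of the ambient field for which `deg xᵢ = eᵢ` and every `ŷⱼ` has degree `0`. -/
def degreeMatrix (B0 G : Matrix (Fin n) (Fin n) ℤ) : Matrix (Fin n) (Fin n ⊕ Fin n) ℤ :=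
  fromCols Gᵀ (-B0)

/-- The new `g`-vector is the degree of the first exchange monomial minus the old one. -/
def gMut (B0 G : Matrix (Fin n) (Fin n) ℤ) (B : Matrix (Fin n ⊕ Fin n) (Fin n) ℤ) (k : Fin n) :
    Matrix (Fin n) (Fin n) ℤ :=
  G.updateRow k (degreeMatrix B0 G *ᵥ (fun r => ((B r k).toNat : ℤ)) - G k)

lemma degreeMatrix_gMut :
    degreeMatrix B0 (gMut B0 G B k) = (degreeMatrix B0 G).updateCol (Sum.inl k)
      (degreeMatrix B0 G *ᵥ (fun r => ((B r k).toNat : ℤ))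
        - fun m => degreeMatrix B0 G m (Sum.inl k)) := by
  ext m (i | j) <;> simp [degreeMatrix, gMut, updateRow_apply, updateCol_apply]

lemma yhat_eq (j : Fin n) : yhat B0 j = yvF n j * xMonomial (B0ᵀ j) := rfl

lemma exchangeMonomial_eq (hX : ∀ i, X i = xMonomial (G i) * H i) (e : Fin n ⊕ Fin n → ℕ) :
    (∏ j, yvF n j ^ e (Sum.inr j)) * ∏ i, X i ^ e (Sum.inl i)
      = xMonomial (degreeMatrix B0 G *ᵥ fun r => (e r : ℤ))
        * ((∏ j, yhat B0 j ^ e (Sum.inr j)) * ∏ i, H i ^ e (Sum.inl i)) := by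
  have hy : ∏ j, yhat B0 j ^ e (Sum.inr j)
      = (∏ j, yvF n j ^ e (Sum.inr j)) * xMonomial (∑ j, e (Sum.inr j) • B0ᵀ j) := by
    simp only [yhat_eq, mul_pow, Finset.prod_mul_distrib, xMonomial_sum, xMonomial_nsmul]
  have hx : ∏ i, X i ^ e (Sum.inl i)
      = xMonomial (∑ i, e (Sum.inl i) • G i) * ∏ i, H i ^ e (Sum.inl i) := by
    simp only [hX, mul_pow, Finset.prod_mul_distrib, xMonomial_sum, xMonomial_nsmul]
  have hdeg : degreeMatrix B0 G *ᵥ (fun r => (e r : ℤ))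
      = ∑ i, e (Sum.inl i) • G i - ∑ j, e (Sum.inr j) • B0ᵀ j := by
    ext m
    simp only [degreeMatrix, mulVec, dotProduct, Fintype.sum_sum_type, fromCols_apply_inl,
      fromCols_apply_inr, transpose_apply, Matrix.neg_apply, Pi.sub_apply, Finset.sum_apply,
      nsmul_eq_mul, Pi.mul_apply, Pi.natCast_apply, mul_comm]
    simp only [neg_mul, Finset.sum_neg_distrib, sub_eq_add_neg]
  rw [hdeg, xMonomial_sub, hy, hx]
  field_simp [xMonomial_ne_zero]

lemma Xstep_self_eq (hX : ∀ i, X i = xMonomial (G i) * H i)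
    (hW : degreeMatrix B0 G * B = 0) (hH : H k ≠ 0) :
    Xstep B X k k = xMonomial (gMut B0 G B k k) * FhatStep B0 B H k k := by
  simp only [Xstep, FhatStep, if_pos]
  rw [exchangeMonomial_eq hX (fun r => (B r k).toNat),
    exchangeMonomial_eq hX (fun r => (-B r k).toNat), mulVec_toNat_neg_eq hW, hX k, gMut,
    updateRow_self, xMonomial_sub]
  field_simp [xMonomial_ne_zero]

lemma yhat_mem_subtractionFree (j : Fin n) : yhat B0 j ∈ subtractionFree (Fin n ⊕ Fin n) ℚ :=
  mul_mem (subtractionFree.algebraMap_X_mem _) (xMonomial_mem_subtractionFree _)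

lemma FhatStep_mem_subtractionFree (hH : ∀ i, H i ∈ subtractionFree (Fin n ⊕ Fin n) ℚ)
    (k l : Fin n) : FhatStep B0 B H k l ∈ subtractionFree (Fin n ⊕ Fin n) ℚ := by
  have hmon (e : Fin n ⊕ Fin n → ℕ) : (∏ j, yhat B0 j ^ e (Sum.inr j)) * ∏ i, H i ^ e (Sum.inl i)
      ∈ subtractionFree (Fin n ⊕ Fin n) ℚ :=
    mul_mem (prod_mem fun j _ => pow_mem (yhat_mem_subtractionFree j) _)
      (prod_mem fun i _ => pow_mem (hH i) _)
  unfold FhatStep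
  split_ifs
  · exact subtractionFree.div_mem (subtractionFree.add_mem (hmon fun r => (B r k).toNat)
      (hmon fun r => (-B r k).toNat)) (hH k)
  · exact hH l

variable {d : Fin n → ℤ}

/-- `G l` is the `g`-vector of `X l` and `H l` plays the role of `F_{l;w}(ŷ)`. -/
structure IsGradedSeed (d : Fin n → ℤ) (B0 : Matrix (Fin n) (Fin n) ℤ)
    (B : Matrix (Fin n ⊕ Fin n) (Fin n) ℤ) (X H : Fin n → ClusterField n)
    (G : Matrix (Fin n) (Fin n) ℤ) : Prop where
  skew : SkewSymmetrizedBy d B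
  degreeMatrix_mul : degreeMatrix B0 G * B = 0
  eq_xMonomial_mul : ∀ l, X l = xMonomial (G l) * H l
  mem_subtractionFree : ∀ l, H l ∈ subtractionFree (Fin n ⊕ Fin n) ℚ

namespace IsGradedSeed

lemma mutate (h : IsGradedSeed d B0 B X H G) (hd : ∀ i, 0 < d i) (k : Fin n) :
    IsGradedSeed d B0 (matMut B k) (Xstep B X k) (FhatStep B0 B H k) (gMut B0 G B k) where
  skew := h.skew.matMut hd k
  degreeMatrix_mul := degreeMatrix_gMut ▸
    updateCol_mul_matMut_eq_zero (h.skew.apply_self (hd k).ne') h.degreeMatrix_mul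
  eq_xMonomial_mul l := by
    by_cases hlk : l = k
    · subst hlk
      exact Xstep_self_eq h.eq_xMonomial_mul h.degreeMatrix_mul
        (subtractionFree.ne_zero (h.mem_subtractionFree l))
    · simp only [Xstep, FhatStep, gMut, if_neg hlk, updateRow_ne hlk, h.eq_xMonomial_mul l]
  mem_subtractionFree := FhatStep_mem_subtractionFree h.mem_subtractionFree k

lemma foldl (hd : ∀ i, 0 < d i) (w : List (Fin n)) :
    ∀ {B : Matrix (Fin n ⊕ Fin n) (Fin n) ℤ} {X H : Fin n → ClusterField n}
      {G : Matrix (Fin n) (Fin n) ℤ}, IsGradedSeed d B0 B X H G →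
    ∃ G', IsGradedSeed d B0
      (w.foldl (fun p k => (matMut p.1 k, Xstep p.1 p.2 k)) (B, X)).1
      (w.foldl (fun p k => (matMut p.1 k, Xstep p.1 p.2 k)) (B, X)).2
      (w.foldl (fun p k => (matMut p.1 k, FhatStep B0 p.1 p.2 k)) (B, H)).2 G' := by
  induction w with
  | nil => exact fun h => ⟨_, h⟩
  | cons k w ih => exact fun h => ih (h.mutate hd k)

end IsGradedSeed

lemma initB_eq_fromRows : initB B0 = fromRows B0 1 := by
  ext (i | i) j <;> simp [initB, one_apply]

lemma isGradedSeed_initial (hskew : ∀ i j, d i * B0 i j = -(d j * B0 j i)) :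
    IsGradedSeed d B0 (initB B0) (xv n) (fun _ => 1) 1 where
  skew := hskew
  degreeMatrix_mul := by simp [degreeMatrix, initB_eq_fromRows, fromCols_mul_fromRows]
  eq_xMonomial_mul l := by
    rw [mul_one, xMonomial, Finset.prod_eq_single l (fun i _ hil => by simp [one_apply_ne' hil])
      (by simp)]
    simp
  mem_subtractionFree _ := one_mem _

end GVectors

theorem exists_unique_g_vector_general (n : ℕ)
    (B0 : Matrix (Fin n) (Fin n) ℤ)
    (d : Fin n → ℤ) (hd : ∀ i, 0 < d i)
    (hskew : ∀ i j, d i * B0 i j = -(d j * B0 j i)) :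
    ∀ (w : List (Fin n)) (l : Fin n),
      ∃! g : Fin n → ℤ,
        Xvar B0 w l = (∏ i, xv n i ^ g i) * Fhat B0 w l := by
  intro w l
  obtain ⟨G, hG⟩ := (isGradedSeed_initial hskew).foldl hd w
  have hF : Fhat B0 w l ≠ 0 := MvPolynomial.subtractionFree.ne_zero (hG.mem_subtractionFree l)
  refine ⟨G l, hG.eq_xMonomial_mul l, fun g hg => xMonomial_injective ?_⟩
  exact mul_right_cancel₀ hF (hg.symm.trans (hG.eq_xMonomial_mul l))

/-- For every `w` and `ℓ` there is a unique `g ∈ ℤⁿ` with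
`X_{ℓ;w} = x₁^{g₁} ⋯ xₙ^{gₙ} · F_{ℓ;w}(ŷ₁,…,ŷₙ)`. -/
theorem exists_unique_g_vector (n : ℕ) (hn : 1 ≤ n)
    (B0 : Matrix (Fin n) (Fin n) ℤ)
    (d : Fin n → ℤ) (hd : ∀ i, 0 < d i)
    (hskew : ∀ i j, d i * B0 i j = -(d j * B0 j i)) :
    ∀ (w : List (Fin n)) (l : Fin n),
      ∃! g : Fin n → ℤ,
        Xvar B0 w l = (∏ i, xv n i ^ g i) * Fhat B0 w l :=
  exists_unique_g_vector_general n B0 d hd hskew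

end
end

section
/- (Laurent phenomenon for generalized Y-systems.) For the Y-system associated with (A, ε), every element y_{j;m} with ε(j) = (−1)^{m−1}, viewed as a rational function in the initial data u₁,…,uₙ, is a Laurent polynomial with integer coefficients: y_{j;m} ∈ ℤ[u₁^{±1},…,uₙ^{±1}]. -/
/-! Statement 9 (Fomin–Zelevinsky, "Cluster algebras IV", Theorem 8.8):
Laurent phenomenon for generalized Y-systems. -/

open scoped BigOperators Classical

noncomputable section

/-- The field `ℚ(u₁,…,uₙ)` of rational functions in the initial data. -/
abbrev UField (n : ℕ) : Type := FractionRing (MvPolynomial (Fin n) ℚ)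

/-- The initial variable `uⱼ`. -/
def uv (n : ℕ) (j : Fin n) : UField n :=
  algebraMap (MvPolynomial (Fin n) ℚ) (UField n) (MvPolynomial.X j)

/-- The upward half of the `Y`-system: `ZY A ε r j = y_{j;r}` if `ε j = (−1)^{r−1}`,
and `ZY A ε r j = y_{j;r−1}` otherwise; `ZY A ε 0 = (u₁,…,uₙ)` encodes the
initial conditions `y_{i;−1} = uᵢ` (`ε i = 1`), `y_{j;0} = uⱼ` (`ε j = −1`). -/
def ZY {n : ℕ} (A : Matrix (Fin n) (Fin n) ℤ) (ε : Fin n → ℤˣ) : ℕ → Fin n → UField n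
  | 0 => uv n
  | (r + 1) => fun j =>
      if ε j = (-1 : ℤˣ) ^ r then
        (ZY A ε r j)⁻¹ *
          ∏ i ∈ Finset.univ.filter (fun i => ε i = -ε j), (ZY A ε r i + 1) ^ (-(A i j)).toNat
      else ZY A ε r j

/-- The downward half of the `Y`-system: for `s ≥ 1`, `VY A ε s j = y_{j;−s}` if
`ε j = (−1)^{s+1}`, and `VY A ε s j = y_{j;−s−1}` otherwise. -/
def VY {n : ℕ} (A : Matrix (Fin n) (Fin n) ℤ) (ε : Fin n → ℤˣ) : ℕ → Fin n → UField n
  | 0 => uv n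
  | 1 => uv n
  | (s + 2) => fun j =>
      if ε j = (-1 : ℤˣ) ^ (s + 1) then
        (VY A ε (s + 1) j)⁻¹ *
          ∏ i ∈ Finset.univ.filter (fun i => ε i = -ε j),
            (VY A ε (s + 1) i + 1) ^ (-(A i j)).toNat
      else VY A ε (s + 1) j

/-- The element `y_{j;m}` of the `Y`-system associated with `(A, ε)` (meaningful
for `ε j = (−1)^{m−1}`). -/
def Ysys {n : ℕ} (A : Matrix (Fin n) (Fin n) ℤ) (ε : Fin n → ℤˣ) (m : ℤ) (j : Fin n) :
    UField n :=
  if 0 ≤ m then ZY A ε m.toNat j else VY A ε (-m).toNat j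

/-! Fomin–Zelevinsky's argument. Let `Φ_ε` be the field endomorphism sending `u` to the
first step `y₁ = ZY A ε 1`; it exists because `y₁` is algebraically independent (it replaces
`u_k`, `ε k = 1`, by `N_k / u_k` with `N_k` a polynomial in the other variables). Since
`Φ_ε (ZY A (-ε) s) = ZY A ε (s + 1)`, by induction `y_{s+3}` is a Laurent polynomial both in
`y₁` and in `y₃`. In terms of `y₁`, its denominator is a monomial times powers of the primes
`u_j + 1`, `ε j = -1`. In terms of `y₃`, it has a denominator prime to `u_j + 1`: `y₃` and
`y₃⁻¹` are fractions whose numerators and denominators do not vanish at the point `u_j = -1`,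
`u_i = 1` (`i ≠ j`); for the factor `G_j / (u_j + 1)` of the numerator this is a derivative
computation. The downward half of the system is the upward half for `-ε`. -/

namespace RingHom

section CommRing

variable {R K : Type*} [CommRing R] [CommRing K] (f : R →+* K)

def fracSubring (S : Submonoid R) : Subring K where
  carrier := {x | ∃ a, ∃ s ∈ S, x * f s = f a}
  one_mem' := ⟨1, 1, S.one_mem, by simp⟩
  zero_mem' := ⟨0, 1, S.one_mem, by simp⟩
  mul_mem' := by
    rintro x y ⟨a, s, hs, hx⟩ ⟨b, t, ht, hy⟩
    exact ⟨a * b, s * t, S.mul_mem hs ht, by rw [map_mul, map_mul, ← hx, ← hy]; ring⟩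
  add_mem' := by
    rintro x y ⟨a, s, hs, hx⟩ ⟨b, t, ht, hy⟩
    refine ⟨a * t + b * s, s * t, S.mul_mem hs ht, ?_⟩
    rw [map_add, map_mul, map_mul, map_mul, ← hx, ← hy]
    ring
  neg_mem' := by
    rintro x ⟨a, s, hs, hx⟩
    exact ⟨-a, s, hs, by rw [map_neg, ← hx]; ring⟩

variable {f}

theorem map_mem_fracSubring (S : Submonoid R) (a : R) : f a ∈ f.fracSubring S :=
  ⟨a, 1, S.one_mem, by simp⟩

theorem mem_fracSubring_of_mul_prime_mem [IsDomain K] (hf : Function.Injective f) {p : R}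
    (hp : Prime p) {S T : Submonoid R} (hT : ∀ d ∈ T, ¬ p ∣ d) {y : K}
    (hyT : y ∈ f.fracSubring T) (hyp : y * f p ∈ f.fracSubring S) : y ∈ f.fracSubring S := by
  obtain ⟨c, d, hd, hyd⟩ := hyT
  obtain ⟨a, s, hs, hys⟩ := hyp
  have had : a * d = p * (c * s) := hf <| by
    simp only [map_mul]
    rw [← hys, ← hyd]
    ring
  obtain ⟨a', rfl⟩ := (hp.dvd_or_dvd ⟨_, had⟩).resolve_right (hT d hd)
  have hfp : f p ≠ 0 := (map_ne_zero_iff f hf).2 hp.ne_zero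
  refine ⟨a', s, hs, mul_left_cancel₀ hfp ?_⟩
  rw [← map_mul, ← hys]
  ring

theorem mem_fracSubring_of_mem_sup_closure [IsDomain K] (hf : Function.Injective f)
    {ι : Type*} {p : ι → R} (hp : ∀ i, Prime (p i)) {T : ι → Submonoid R}
    (hT : ∀ i, ∀ d ∈ T i, ¬ p i ∣ d) {S : Submonoid R} {x : K}
    (hxT : ∀ i, x ∈ f.fracSubring (T i))
    (hx : x ∈ f.fracSubring (S ⊔ Submonoid.closure (Set.range p))) :
    x ∈ f.fracSubring S := by
  have key : ∀ z ∈ Submonoid.closure (Set.range p), ∀ r : R,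
      x * f r * f z ∈ f.fracSubring S → x * f r ∈ f.fracSubring S := by
    intro z hz
    induction hz using Submonoid.closure_induction with
    | mem z hz =>
      obtain ⟨i, rfl⟩ := hz
      exact fun r => mem_fracSubring_of_mul_prime_mem hf (hp i) (hT i)
        (mul_mem (hxT i) (map_mem_fracSubring _ r))
    | one => simp
    | mul z₁ z₂ _ _ ih₁ ih₂ =>
      intro r h
      have h' : x * f (r * z₁) * f z₂ ∈ f.fracSubring S := by
        simpa only [map_mul, mul_assoc] using h
      exact ih₁ r (by simpa only [map_mul, mul_assoc] using ih₂ _ h')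
  obtain ⟨a, s, hs, hxs⟩ := hx
  obtain ⟨y, hy, z, hz, rfl⟩ := Submonoid.mem_sup.1 hs
  simpa using key z hz 1 (by simpa using ⟨a, y, hy, by rw [← hxs, map_mul]; ring⟩)

end CommRing

section Field

variable {R K : Type*} [CommRing R] [Field K] {f : R →+* K} {S : Submonoid R}

theorem div_mem_fracSubring (a : R) {s : R} (hs : s ∈ S) : f a / f s ∈ f.fracSubring S := by
  by_cases h : f s = 0
  · rw [h, div_zero]
    exact zero_mem _
  · exact ⟨a, s, hs, div_mul_cancel₀ _ h⟩

theorem div_and_inv_mem_fracSubring {a s : R} (ha : a ∈ S) (hs : s ∈ S) :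
    f a / f s ∈ f.fracSubring S ∧ (f a / f s)⁻¹ ∈ f.fracSubring S :=
  ⟨div_mem_fracSubring a hs, inv_div (f a) (f s) ▸ div_mem_fracSubring s ha⟩

end Field

end RingHom

namespace MvPolynomial

theorem prime_X_add_C {σ R : Type*} [CommRing R] [IsDomain R] (i : σ) (c : R) :
    Prime (X i + C c : MvPolynomial σ R) := by
  let e : MvPolynomial σ R ≃ₐ[R] MvPolynomial σ R := AlgEquiv.ofAlgHom
    (aeval (Function.update X i (X i + C c))) (aeval (Function.update X i (X i - C c)))
    (algHom_ext fun k => by by_cases hk : k = i <;> simp [hk])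
    (algHom_ext fun k => by by_cases hk : k = i <;> simp [hk])
  have he : e (X i) = X i + C c := by simp [e]
  rw [← he, MulEquiv.prime_iff]
  exact X_prime

end MvPolynomial

namespace Polynomial

variable {R : Type*} [CommSemiring R] [PartialOrder R] [IsOrderedRing R]

def jetNonneg (a : R) : Subsemiring R[X] where
  carrier := {p | 0 ≤ p.eval a ∧ 0 ≤ (derivative p).eval a}
  zero_mem' := by simp
  one_mem' := by simp
  add_mem' := by
    rintro p q ⟨hp, hp'⟩ ⟨hq, hq'⟩
    simp only [Set.mem_ofPred_eq, eval_add, derivative_add]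
    exact ⟨add_nonneg hp hq, add_nonneg hp' hq'⟩
  mul_mem' := by
    rintro p q ⟨hp, hp'⟩ ⟨hq, hq'⟩
    simp only [Set.mem_ofPred_eq, eval_mul, derivative_mul, eval_add]
    exact ⟨mul_nonneg hp hq, add_nonneg (mul_nonneg hp' hq) (mul_nonneg hp hq')⟩

theorem C_mem_jetNonneg (a : R) {c : R} (hc : 0 ≤ c) : C c ∈ jetNonneg a := by
  simp [jetNonneg, hc]

end Polynomial

namespace AlgebraicIndependent

open Algebra Function

variable {ι R F : Type*} [CommRing R] [Field F] [Algebra R F] {x : ι → F}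

theorem update_mul_inv [DecidableEq ι] (hx : AlgebraicIndependent R x) (i : ι)
    {a : F} (ha : a ∈ adjoin R (x '' {i}ᶜ)) (ha0 : a ≠ 0) :
    AlgebraicIndependent R (update x i (a * (x i)⁻¹)) := by
  rw [iff_transcendental_adjoin_image i] at hx ⊢
  have himage : update x i (a * (x i)⁻¹) '' {i}ᶜ = x '' {i}ᶜ :=
    Set.image_congr fun k hk => update_of_ne hk _ _
  refine ⟨by convert hx.1 using 2 with j; exact update_of_ne j.2 _ _, ?_⟩
  rw [himage, update_self]
  intro halg
  have hxi : x i = a * (a * (x i)⁻¹)⁻¹ := by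
    rw [mul_inv, inv_inv, ← mul_assoc, mul_inv_cancel₀ ha0, one_mul]
  exact hx.2 (hxi ▸ (isAlgebraic_algebraMap (⟨a, ha⟩ : adjoin R (x '' {i}ᶜ))).mul halg.inv)

theorem piecewise_mul_inv [DecidableEq ι] (hx : AlgebraicIndependent R x) (s : Finset ι)
    {a : ι → F} (ha : ∀ i ∈ s, a i ∈ adjoin R (x '' (↑s)ᶜ)) (ha0 : ∀ i ∈ s, a i ≠ 0) :
    AlgebraicIndependent R (s.piecewise (fun i => a i * (x i)⁻¹) x) := by
  induction s using Finset.induction_on with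
  | empty => simpa using hx
  | insert i s hi ih =>
    have hsub : x '' (↑(insert i s))ᶜ ⊆ x '' (↑s)ᶜ :=
      Set.image_mono (Set.compl_subset_compl.2 (by simp))
    have ih' := ih (fun j hj => adjoin_mono hsub (ha j (Finset.mem_insert_of_mem hj)))
      (fun j hj => ha0 j (Finset.mem_insert_of_mem hj))
    set y := s.piecewise (fun i => a i * (x i)⁻¹) x
    have hyi : y i = x i := Finset.piecewise_eq_of_notMem _ _ _ hi
    have hsub' : x '' (↑(insert i s))ᶜ ⊆ y '' {i}ᶜ := by
      rintro _ ⟨k, hk, rfl⟩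
      simp only [Finset.coe_insert, Set.mem_compl_iff, Set.mem_insert_iff, not_or] at hk
      exact ⟨k, hk.1, Finset.piecewise_eq_of_notMem _ _ _ hk.2⟩
    rw [Finset.piecewise_insert, ← hyi]
    exact ih'.update_mul_inv i (adjoin_mono hsub' (ha i (Finset.mem_insert_self i s)))
      (ha0 i (Finset.mem_insert_self i s))

end AlgebraicIndependent

namespace YSystem

open MvPolynomial

variable {n : ℕ}

section Laurent

def ofPoly (n : ℕ) : MvPolynomial (Fin n) ℤ →+* UField n :=
  (algebraMap (MvPolynomial (Fin n) ℚ) (UField n)).comp (map (Int.castRingHom ℚ))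

theorem ofPoly_injective : Function.Injective (ofPoly n) :=
  (IsFractionRing.injective (MvPolynomial (Fin n) ℚ) (UField n)).comp
    (map_injective _ (Int.castRingHom ℚ).injective_int)

theorem ofPoly_X (k : Fin n) : ofPoly n (X k) = uv n k := by
  simp [ofPoly, uv]

theorem ofPoly_ne_zero {p : MvPolynomial (Fin n) ℤ} (hp : p ≠ 0) : ofPoly n p ≠ 0 :=
  (map_ne_zero_iff _ ofPoly_injective).2 hp

theorem uv_ne_zero (k : Fin n) : uv n k ≠ 0 :=
  ofPoly_X k ▸ ofPoly_ne_zero (X_ne_zero k)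

variable (n) in
def monomials : Submonoid (MvPolynomial (Fin n) ℤ) := Submonoid.closure (Set.range X)

theorem X_mem_monomials (k : Fin n) : X k ∈ monomials n :=
  Submonoid.subset_closure ⟨k, rfl⟩

variable (n) in
def laurentSubring : Subring (UField n) :=
  Subring.closure (Set.range (uv n) ∪ Set.range fun j => (uv n j)⁻¹)

theorem uv_mem_laurentSubring (k : Fin n) : uv n k ∈ laurentSubring n :=
  Subring.subset_closure (Or.inl ⟨k, rfl⟩)

theorem uv_inv_mem_laurentSubring (k : Fin n) : (uv n k)⁻¹ ∈ laurentSubring n :=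
  Subring.subset_closure (Or.inr ⟨k, rfl⟩)

theorem ofPoly_mem_laurentSubring (p : MvPolynomial (Fin n) ℤ) :
    ofPoly n p ∈ laurentSubring n := by
  have : ofPoly n = eval₂Hom (Int.castRingHom _) (uv n) :=
    ringHom_ext (fun a => by simp) (fun k => by simp [ofPoly_X])
  rw [this, coe_eval₂Hom]
  exact eval₂_mem (fun _ _ => intCast_mem _ _) uv_mem_laurentSubring

theorem fracSubring_monomials_le_laurentSubring :
    (ofPoly n).fracSubring (monomials n) ≤ laurentSubring n := by
  have hunit : ∀ s ∈ monomials n, ∃ w ∈ laurentSubring n, ofPoly n s * w = 1 := by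
    intro s hs
    induction hs using Submonoid.closure_induction with
    | mem s hs =>
      obtain ⟨k, rfl⟩ := hs
      exact ⟨_, uv_inv_mem_laurentSubring k, by rw [ofPoly_X, mul_inv_cancel₀ (uv_ne_zero k)]⟩
    | one => exact ⟨1, one_mem _, by simp⟩
    | mul s t _ _ hs ht =>
      obtain ⟨v, hv, hsv⟩ := hs
      obtain ⟨w, hw, htw⟩ := ht
      exact ⟨v * w, mul_mem hv hw, by rw [map_mul, mul_mul_mul_comm, hsv, htw, one_mul]⟩
  rintro x ⟨a, s, hs, hx⟩
  obtain ⟨w, hw, hsw⟩ := hunit s hs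
  have : x = ofPoly n a * w := by rw [← hx, mul_assoc, hsw, mul_one]
  exact this ▸ mul_mem (ofPoly_mem_laurentSubring a) hw

theorem map_mem_of_mem_laurentSubring {K : Type*} [DivisionRing K] (Ψ : UField n →+* K)
    {B : Subring K} (hB : ∀ k, Ψ (uv n k) ∈ B ∧ (Ψ (uv n k))⁻¹ ∈ B) {x : UField n}
    (hx : x ∈ laurentSubring n) : Ψ x ∈ B := by
  refine (Subring.closure_le (t := B.comap Ψ)).2 ?_ hx
  rintro _ (⟨k, rfl⟩ | ⟨k, rfl⟩)
  · exact (hB k).1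
  · simpa [map_inv₀] using (hB k).2

end Laurent

section Polynomials

variable (A : Matrix (Fin n) (Fin n) ℤ) (ε : Fin n → ℤˣ)

def edgeMult (i j : Fin n) : ℕ := (-(A i j)).toNat

def opp (j : Fin n) : Finset (Fin n) := Finset.univ.filter fun i => ε i = -ε j

def polyN (k : Fin n) : MvPolynomial (Fin n) ℤ := ∏ j ∈ opp ε k, (X j + 1) ^ edgeMult A j k

def polyU (k : Fin n) : MvPolynomial (Fin n) ℤ := ∏ i ∈ opp ε k, X i ^ edgeMult A i k

def polyM (k : Fin n) : MvPolynomial (Fin n) ℤ :=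
  ∏ i ∈ opp ε k, (polyN A ε i + X i) ^ edgeMult A i k

def polyG (k : Fin n) : MvPolynomial (Fin n) ℤ := polyM A ε k + X k * polyU A ε k

variable {A ε}

theorem mem_opp {i j : Fin n} : i ∈ opp ε j ↔ ε i = -ε j := by simp [opp]

theorem ne_of_mem_opp {i j k : Fin n} (hi : i ∈ opp ε k) (hk : ε k = ε j) : i ≠ j := by
  rintro rfl
  exact units_ne_neg_self _ (hk ▸ mem_opp.1 hi)

theorem mem_opp_comm {i j : Fin n} : i ∈ opp ε j ↔ j ∈ opp ε i := by
  rw [mem_opp, mem_opp, eq_comm, neg_eq_iff_eq_neg]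

theorem opp_neg (j : Fin n) : opp (-ε) j = opp ε j := by
  ext i
  rw [mem_opp, mem_opp, Pi.neg_apply, Pi.neg_apply, neg_inj]

theorem X_add_one_prime (j : Fin n) : Prime (X j + 1 : MvPolynomial (Fin n) ℤ) := by
  simpa using prime_X_add_C j (1 : ℤ)

variable (A ε) in
theorem polyN_ne_zero (k : Fin n) : polyN A ε k ≠ 0 :=
  Finset.prod_ne_zero_iff.2 fun j _ => pow_ne_zero _ (X_add_one_prime j).ne_zero

variable (A ε) in
theorem polyU_ne_zero (k : Fin n) : polyU A ε k ≠ 0 :=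
  Finset.prod_ne_zero_iff.2 fun i _ => pow_ne_zero _ (X_ne_zero i)

theorem X_mul_polyU_mem_monomials (k : Fin n) : X k * polyU A ε k ∈ monomials n :=
  mul_mem (X_mem_monomials k) (prod_mem fun i _ => pow_mem (X_mem_monomials i) _)

theorem edgeMult_pos_comm (hA : ∀ i j, A i j < 0 → A j i < 0) {i j : Fin n}
    (h : 0 < edgeMult A i j) : 0 < edgeMult A j i := by
  unfold edgeMult at *
  have := hA i j (by omega)
  omega

/-- Modulo `u_j + 1`, every `N_i` with `a_{ji} < 0` vanishes, so `M_j ≡ U_j` and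
`G_j ≡ (1 + u_j) U_j ≡ 0`. -/
theorem X_add_one_dvd_polyG (hA : ∀ i j, A i j < 0 → A j i < 0) (j : Fin n) :
    X j + 1 ∣ polyG A ε j := by
  let π := Ideal.Quotient.mk (Ideal.span {(X j + 1 : MvPolynomial (Fin n) ℤ)})
  have hXj : π (X j) = -1 := by
    refine eq_neg_of_add_eq_zero_left ?_
    rw [← map_one π, ← map_add, Ideal.Quotient.eq_zero_iff_mem]
    exact Ideal.mem_span_singleton_self _
  have hfac : ∀ i ∈ opp ε j,
      π ((polyN A ε i + X i) ^ edgeMult A i j) = π (X i ^ edgeMult A i j) := by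
    intro i hi
    rcases Nat.eq_zero_or_pos (edgeMult A i j) with h | h
    · rw [h, pow_zero, pow_zero]
    have hN : π (polyN A ε i) = 0 := by
      rw [polyN, map_prod]
      refine Finset.prod_eq_zero (mem_opp_comm.1 hi) ?_
      rw [map_pow, map_add, hXj, map_one, neg_add_cancel, zero_pow (edgeMult_pos_comm hA h).ne']
    rw [map_pow, map_add, hN, zero_add, map_pow]
  rw [← Ideal.mem_span_singleton, ← Ideal.Quotient.eq_zero_iff_mem, polyG, map_add, polyM,
    map_prod, Finset.prod_congr rfl hfac, ← map_prod, ← polyU, map_mul, hXj]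
  ring

end Polynomials

section FirstSteps

variable {A : Matrix (Fin n) (Fin n) ℤ} {ε : Fin n → ℤˣ}

variable (A ε) in
theorem ZY_succ (r : ℕ) (j : Fin n) :
    ZY A ε (r + 1) j = if ε j = (-1) ^ r then
      (ZY A ε r j)⁻¹ * ∏ i ∈ opp ε j, (ZY A ε r i + 1) ^ edgeMult A i j
    else ZY A ε r j :=
  rfl

theorem ZY_succ_of_ne {r : ℕ} {j : Fin n} (h : ε j ≠ (-1) ^ r) :
    ZY A ε (r + 1) j = ZY A ε r j := by
  rw [ZY_succ, if_neg h]

theorem ZY_one_of_eq_one {k : Fin n} (hk : ε k = 1) :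
    ZY A ε 1 k = ofPoly n (polyN A ε k) / ofPoly n (X k) := by
  rw [ZY_succ, if_pos (by rw [hk, pow_zero]), polyN, map_prod, ofPoly_X, inv_mul_eq_div]
  simp [ofPoly_X, ZY]

theorem ZY_one_of_eq_neg_one {k : Fin n} (hk : ε k = -1) : ZY A ε 1 k = uv n k :=
  ZY_succ_of_ne (by rw [hk, pow_zero]; decide)

theorem ZY_two_of_eq_one {k : Fin n} (hk : ε k = 1) : ZY A ε 2 k = ZY A ε 1 k :=
  ZY_succ_of_ne (by rw [hk, pow_one]; decide)

theorem ZY_three_of_eq_neg_one {k : Fin n} (hk : ε k = -1) : ZY A ε 3 k = ZY A ε 2 k :=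
  ZY_succ_of_ne (by rw [hk]; decide)

theorem ZY_two_of_eq_neg_one {k : Fin n} (hk : ε k = -1) :
    ZY A ε 2 k = ofPoly n (polyM A ε k) / ofPoly n (X k * polyU A ε k) := by
  have hfac : ∀ i ∈ opp ε k, (ZY A ε 1 i + 1) ^ edgeMult A i k =
      ofPoly n ((polyN A ε i + X i) ^ edgeMult A i k) / ofPoly n (X i ^ edgeMult A i k) := by
    intro i hi
    rw [ZY_one_of_eq_one (by rw [mem_opp.1 hi, hk, neg_neg]), map_pow, map_pow, ← div_pow,
      map_add, div_add_one (ofPoly_X i ▸ uv_ne_zero i)]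
  rw [ZY_succ, if_pos (by rw [hk, pow_one]), Finset.prod_congr rfl hfac,
    Finset.prod_div_distrib, ZY_one_of_eq_neg_one hk, polyM, polyU, map_mul, map_prod,
    map_prod, ofPoly_X]
  ring

theorem ZY_three_of_eq_one {H : Fin n → MvPolynomial (Fin n) ℤ}
    (hH : ∀ j, polyG A ε j = (X j + 1) * H j) {k : Fin n} (hk : ε k = 1) :
    ZY A ε 3 k = ofPoly n (X k * ∏ j ∈ opp ε k, H j ^ edgeMult A j k) /
      ofPoly n (∏ j ∈ opp ε k, (X j * polyU A ε j) ^ edgeMult A j k) := by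
  have hfac : ∀ j ∈ opp ε k, (ZY A ε 2 j + 1) ^ edgeMult A j k =
      ofPoly n ((X j + 1) ^ edgeMult A j k) * ofPoly n (H j ^ edgeMult A j k) /
        ofPoly n ((X j * polyU A ε j) ^ edgeMult A j k) := by
    intro j hj
    have hXU := ofPoly_ne_zero (mul_ne_zero (X_ne_zero j) (polyU_ne_zero A ε j))
    rw [ZY_two_of_eq_neg_one (by rw [mem_opp.1 hj, hk]), div_add_one hXU, ← map_add, ← polyG,
      hH, div_pow, ← map_pow, ← map_pow, mul_pow, map_mul]
  rw [ZY_succ, if_pos (by rw [hk]; decide), Finset.prod_congr rfl hfac,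
    Finset.prod_div_distrib, Finset.prod_mul_distrib, ZY_two_of_eq_one hk, ZY_one_of_eq_one hk]
  have hN := ofPoly_ne_zero (polyN_ne_zero A ε k)
  simp only [polyN, map_prod, map_mul] at hN ⊢
  field_simp

theorem ZY_mem_fracSubring_monomials {t : ℕ} (ht : t ≤ 2) (k : Fin n) :
    ZY A ε t k ∈ (ofPoly n).fracSubring (monomials n) := by
  have h0 : ∀ k, uv n k ∈ (ofPoly n).fracSubring (monomials n) := fun k =>
    ofPoly_X k ▸ RingHom.map_mem_fracSubring _ _
  have h1 : ∀ k, ZY A ε 1 k ∈ (ofPoly n).fracSubring (monomials n) := by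
    intro k
    rcases Int.units_eq_one_or (ε k) with hk | hk
    · rw [ZY_one_of_eq_one hk]
      exact RingHom.div_mem_fracSubring _ (X_mem_monomials k)
    · rw [ZY_one_of_eq_neg_one hk]
      exact h0 k
  interval_cases t
  · exact h0 k
  · exact h1 k
  · rcases Int.units_eq_one_or (ε k) with hk | hk
    · rw [ZY_two_of_eq_one hk]
      exact h1 k
    · rw [ZY_two_of_eq_neg_one hk]
      exact RingHom.div_mem_fracSubring _ (X_mul_polyU_mem_monomials k)

end FirstSteps

section Regularity

variable {A : Matrix (Fin n) (Fin n) ℤ} {ε : Fin n → ℤˣ}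

/-- Restriction to the line through `(1, …, 1)` in the direction of `u_j`. -/
def toLine (j : Fin n) : MvPolynomial (Fin n) ℤ →ₐ[ℤ] Polynomial ℤ :=
  aeval (Function.update 1 j Polynomial.X)

theorem toLine_X_self (j : Fin n) : toLine j (X j) = Polynomial.X := by
  simp [toLine]

theorem toLine_X_of_ne {j k : Fin n} (h : k ≠ j) : toLine j (X k) = 1 := by
  simp [toLine, h]

def nonvanishing (j : Fin n) : Submonoid (MvPolynomial (Fin n) ℤ) :=
  (nonZeroDivisors ℤ).comap ((Polynomial.evalRingHom (-1)).comp (toLine j).toRingHom)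

theorem mem_nonvanishing {j : Fin n} {d : MvPolynomial (Fin n) ℤ} :
    d ∈ nonvanishing j ↔ (toLine j d).eval (-1) ≠ 0 :=
  mem_nonZeroDivisors_iff_ne_zero

theorem not_X_add_one_dvd_of_mem_nonvanishing {j : Fin n} {d : MvPolynomial (Fin n) ℤ}
    (hd : d ∈ nonvanishing j) : ¬ X j + 1 ∣ d := by
  rintro ⟨c, rfl⟩
  simp [mem_nonvanishing, toLine_X_self] at hd

theorem monomials_le_nonvanishing (j : Fin n) : monomials n ≤ nonvanishing j := by
  refine Submonoid.closure_le.2 (Set.range_subset_iff.2 fun k => mem_nonvanishing.2 ?_)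
  by_cases hk : k = j
  · simp [hk, toLine_X_self]
  · simp [toLine_X_of_ne hk]

variable (A ε) in
theorem toLine_polyN_mem_jetNonneg (j i : Fin n) :
    toLine j (polyN A ε i) ∈ Polynomial.jetNonneg (-1) := by
  rw [polyN, map_prod]
  refine prod_mem fun l _ => ?_
  rw [map_pow]
  refine pow_mem ?_ _
  by_cases hl : l = j
  · simp [hl, toLine_X_self, Polynomial.jetNonneg]
  · rw [map_add, toLine_X_of_ne hl, map_one, one_add_one_eq_two]
    exact Polynomial.C_mem_jetNonneg (-1) zero_le_two

theorem toLine_polyM {j k : Fin n} (hk : ε k = ε j) :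
    toLine j (polyM A ε k) = ∏ i ∈ opp ε k, (toLine j (polyN A ε i) + 1) ^ edgeMult A i k := by
  rw [polyM, map_prod]
  refine Finset.prod_congr rfl fun i hi => ?_
  rw [map_pow, map_add, toLine_X_of_ne (ne_of_mem_opp hi hk)]

theorem toLine_polyM_mem_jetNonneg {j k : Fin n} (hk : ε k = ε j) :
    toLine j (polyM A ε k) ∈ Polynomial.jetNonneg (-1) := by
  rw [toLine_polyM hk]
  exact prod_mem fun i _ => pow_mem (add_mem (toLine_polyN_mem_jetNonneg A ε j i) (one_mem _)) _

theorem toLine_polyU {j k : Fin n} (hk : ε k = ε j) : toLine j (polyU A ε k) = 1 := by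
  rw [polyU, map_prod]
  exact Finset.prod_eq_one fun i hi => by
    rw [map_pow, toLine_X_of_ne (ne_of_mem_opp hi hk), one_pow]

theorem polyM_mem_nonvanishing {j k : Fin n} (hk : ε k = ε j) :
    polyM A ε k ∈ nonvanishing j := by
  simp only [mem_nonvanishing, toLine_polyM hk, Polynomial.eval_prod, Polynomial.eval_pow]
  refine (Finset.prod_pos fun i _ => pow_pos ?_ _).ne'
  rw [Polynomial.eval_add, Polynomial.eval_one]
  linarith [(toLine_polyN_mem_jetNonneg A ε j i).1]

theorem mem_nonvanishing_of_polyG_eq {j j' : Fin n} {H : MvPolynomial (Fin n) ℤ}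
    (hH : polyG A ε j' = (X j' + 1) * H) (hj' : ε j' = ε j) : H ∈ nonvanishing j := by
  have hG : (toLine j (X j') + 1) * toLine j H = toLine j (polyM A ε j') + toLine j (X j') := by
    rw [← map_one (toLine j), ← map_add, ← map_mul, ← hH, polyG, map_add, map_mul,
      toLine_polyU hj', mul_one]
  have hM := toLine_polyM_mem_jetNonneg (A := A) hj'
  rw [mem_nonvanishing]
  by_cases h : j' = j
  · -- at `u_j = -1` on the line, `H` is the derivative of `G_j`, which is at least `1`
    subst h
    have hd := congrArg (fun p => (Polynomial.derivative p).eval (-1)) hG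
    simp only [toLine_X_self, Polynomial.derivative_mul, Polynomial.derivative_add,
      Polynomial.derivative_X, Polynomial.derivative_one, Polynomial.eval_add,
      Polynomial.eval_mul, Polynomial.eval_X, Polynomial.eval_one, Polynomial.eval_zero] at hd
    linarith [hM.2]
  · have he := congrArg (Polynomial.eval (-1)) hG
    simp only [toLine_X_of_ne h, Polynomial.eval_add, Polynomial.eval_mul,
      Polynomial.eval_one] at he
    linarith [hM.1]

theorem ZY_three_mem_fracSubring_nonvanishing (hA : ∀ i j, A i j < 0 → A j i < 0) {j : Fin n}
    (hj : ε j = -1) (k : Fin n) :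
    ZY A ε 3 k ∈ (ofPoly n).fracSubring (nonvanishing j) ∧
      (ZY A ε 3 k)⁻¹ ∈ (ofPoly n).fracSubring (nonvanishing j) := by
  choose H hH using fun j => X_add_one_dvd_polyG (ε := ε) hA j
  have hmon := monomials_le_nonvanishing j
  rcases Int.units_eq_one_or (ε k) with hk | hk
  · rw [ZY_three_of_eq_one hH hk]
    refine RingHom.div_and_inv_mem_fracSubring
      (mul_mem (hmon (X_mem_monomials k)) (prod_mem fun j' hj' => pow_mem ?_ _))
      (prod_mem fun j' _ => pow_mem (hmon (X_mul_polyU_mem_monomials j')) _)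
    exact mem_nonvanishing_of_polyG_eq (hH j') (by rw [mem_opp.1 hj', hk, hj])
  · rw [ZY_three_of_eq_neg_one hk, ZY_two_of_eq_neg_one hk]
    exact RingHom.div_and_inv_mem_fracSubring (polyM_mem_nonvanishing (by rw [hk, hj]))
      (hmon (X_mul_polyU_mem_monomials k))

variable (ε) in
def denominators : Submonoid (MvPolynomial (Fin n) ℤ) :=
  monomials n ⊔ Submonoid.closure (Set.range fun j : {j // ε j = -1} => X j.1 + 1)

theorem ZY_one_mem_fracSubring_denominators (k : Fin n) :
    ZY A ε 1 k ∈ (ofPoly n).fracSubring (denominators ε) ∧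
      (ZY A ε 1 k)⁻¹ ∈ (ofPoly n).fracSubring (denominators ε) := by
  have hmon : monomials n ≤ denominators ε := le_sup_left
  rcases Int.units_eq_one_or (ε k) with hk | hk
  · rw [ZY_one_of_eq_one hk]
    refine RingHom.div_and_inv_mem_fracSubring
      (prod_mem fun j hj => pow_mem (le_sup_right (a := monomials n) ?_) _)
      (hmon (X_mem_monomials k))
    exact Submonoid.subset_closure ⟨⟨j, by rw [mem_opp.1 hj, hk]⟩, rfl⟩
  · rw [ZY_one_of_eq_neg_one hk, ← ofPoly_X, ← div_one (ofPoly n (X k)), ← map_one (ofPoly n)]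
    exact RingHom.div_and_inv_mem_fracSubring (hmon (X_mem_monomials k)) (one_mem _)

end Regularity

section Shift

variable (A : Matrix (Fin n) (Fin n) ℤ) (ε : Fin n → ℤˣ)

theorem algebraicIndependent_uv : AlgebraicIndependent ℚ (uv n) :=
  (algebraicIndependent_X (Fin n) ℚ).map'
    (f := IsScalarTower.toAlgHom ℚ (MvPolynomial (Fin n) ℚ) (UField n))
    (IsFractionRing.injective _ _)

theorem algebraicIndependent_ZY_one : AlgebraicIndependent ℚ (ZY A ε 1) := by
  let s := Finset.univ.filter fun k => ε k = 1
  have hZY : ZY A ε 1 = s.piecewise (fun k => ofPoly n (polyN A ε k) * (uv n k)⁻¹) (uv n) := by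
    funext k
    rcases Int.units_eq_one_or (ε k) with hk | hk
    · rw [Finset.piecewise_eq_of_mem _ _ _ (by simp [s, hk]), ZY_one_of_eq_one hk, ofPoly_X,
        div_eq_mul_inv]
    · rw [Finset.piecewise_eq_of_notMem _ _ _ (by simp [s, hk]), ZY_one_of_eq_neg_one hk]
  rw [hZY]
  refine algebraicIndependent_uv.piecewise_mul_inv s (fun k hk => ?_)
    (fun k _ => ofPoly_ne_zero (polyN_ne_zero A ε k))
  have hk : ε k = 1 := (Finset.mem_filter.1 hk).2
  rw [polyN, map_prod]
  refine Subalgebra.prod_mem _ fun j hj => ?_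
  rw [map_pow]
  refine Subalgebra.pow_mem _ ?_ _
  rw [map_add, map_one, ofPoly_X]
  refine Subalgebra.add_mem _ (Algebra.subset_adjoin ⟨j, ?_, rfl⟩) (Subalgebra.one_mem _)
  simp [s, mem_opp.1 hj, hk]

def shift : UField n →+* UField n :=
  IsFractionRing.lift (g := (aeval (R := ℚ) (ZY A ε 1)).toRingHom)
    (by exact algebraicIndependent_ZY_one A ε)

theorem shift_uv (k : Fin n) : shift A ε (uv n k) = ZY A ε 1 k := by
  rw [uv, shift]
  exact (IsFractionRing.lift_algebraMap _ _).trans (aeval_X _ k)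

theorem neg_apply_eq_neg_one_pow_iff (k : Fin n) (s : ℕ) :
    (-ε) k = (-1) ^ s ↔ ε k = (-1) ^ (s + 1) := by
  rw [Pi.neg_apply, pow_succ, mul_neg_one, neg_eq_iff_eq_neg]

theorem shift_ZY (s : ℕ) (k : Fin n) : shift A ε (ZY A (-ε) s k) = ZY A ε (s + 1) k := by
  induction s generalizing k with
  | zero => exact shift_uv A ε k
  | succ s ih =>
    rw [ZY_succ A (-ε), ZY_succ A ε (s + 1), opp_neg]
    by_cases h : ε k = (-1) ^ (s + 1)
    · simp only [if_pos ((neg_apply_eq_neg_one_pow_iff ε k s).2 h), if_pos h, map_mul,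
        map_inv₀, map_prod, map_pow, map_add, map_one, ih]
    · rw [if_neg (mt (neg_apply_eq_neg_one_pow_iff ε k s).1 h), if_neg h, ih]

theorem VY_succ (s : ℕ) : VY A ε (s + 1) = ZY A (-ε) s := by
  induction s with
  | zero => rfl
  | succ s ih =>
    funext k
    show (if ε k = (-1 : ℤˣ) ^ (s + 1) then _ else _) = _
    rw [ZY_succ A (-ε), ← ih, opp_neg]
    by_cases h : ε k = (-1) ^ (s + 1)
    · rw [if_pos h, if_pos ((neg_apply_eq_neg_one_pow_iff ε k s).2 h)]
      rfl
    · rw [if_neg h, if_neg (mt (neg_apply_eq_neg_one_pow_iff ε k s).1 h)]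

theorem exists_shift_three :
    ∃ Ψ : UField n →+* UField n, ∀ r k, Ψ (ZY A (-ε) r k) = ZY A ε (r + 3) k := by
  refine ⟨(shift A ε).comp ((shift A (-ε)).comp (shift A ε)), fun r k => ?_⟩
  have h := shift_ZY A (-ε) (r + 1) k
  rw [neg_neg] at h
  simp only [RingHom.comp_apply, shift_ZY, h]

end Shift

theorem ZY_mem_laurentSubring {A : Matrix (Fin n) (Fin n) ℤ} (hA : ∀ i j, A i j < 0 → A j i < 0)
    (t : ℕ) : ∀ (ε : Fin n → ℤˣ) (k : Fin n), ZY A ε t k ∈ laurentSubring n := by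
  induction t using Nat.strong_induction_on with
  | _ t ih =>
  intro ε k
  rcases le_or_gt t 2 with ht | ht
  · exact fracSubring_monomials_le_laurentSubring (ZY_mem_fracSubring_monomials ht k)
  obtain ⟨s, rfl⟩ : ∃ s, t = s + 3 := ⟨t - 3, by omega⟩
  have hD : ZY A ε (s + 3) k ∈ (ofPoly n).fracSubring (denominators ε) := by
    rw [← shift_ZY]
    refine map_mem_of_mem_laurentSubring _ (fun k' => ?_) (ih (s + 2) (by omega) (-ε) k)
    rw [shift_uv]
    exact ZY_one_mem_fracSubring_denominators k'
  obtain ⟨Ψ, hΨ⟩ := exists_shift_three A ε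
  have hO : ∀ j : {j // ε j = -1},
      ZY A ε (s + 3) k ∈ (ofPoly n).fracSubring (nonvanishing j.1) := by
    intro j
    rw [← hΨ]
    refine map_mem_of_mem_laurentSubring Ψ (fun k' => ?_) (ih s (by omega) (-ε) k)
    rw [show Ψ (uv n k') = ZY A ε 3 k' from hΨ 0 k']
    exact ZY_three_mem_fracSubring_nonvanishing hA j.2 k'
  exact fracSubring_monomials_le_laurentSubring <| RingHom.mem_fracSubring_of_mem_sup_closure
    (p := fun j : {j // ε j = -1} => X j.1 + 1) (T := fun j => nonvanishing j.1)
    ofPoly_injective (fun j => X_add_one_prime j.1)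
    (fun _ _ hd => not_X_add_one_dvd_of_mem_nonvanishing hd) hO hD

end YSystem

open YSystem in
theorem Y_system_laurent_phenomenon_general (n : ℕ)
    (A : Matrix (Fin n) (Fin n) ℤ)
    (d : Fin n → ℤ) (hd : ∀ i, 0 < d i)
    (hsym : ∀ i j, d i * A i j = d j * A j i)
    (ε : Fin n → ℤˣ) :
    ∀ (m : ℤ) (j : Fin n), ε j = (-1 : ℤˣ) ^ (m - 1) →
      Ysys A ε m j ∈ Subring.closure
        (Set.range (uv n) ∪ Set.range (fun j => (uv n j)⁻¹)) := by
  intro m j _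
  have hA : ∀ i j, A i j < 0 → A j i < 0 := fun i j h =>
    neg_of_mul_neg_right (hsym i j ▸ mul_neg_of_pos_of_neg (hd i) h) (hd j).le
  rcases le_or_gt 0 m with hm | hm
  · rw [Ysys, if_pos hm]
    exact ZY_mem_laurentSubring hA _ ε j
  · obtain ⟨s, hs⟩ : ∃ s : ℕ, (-m).toNat = s + 1 := ⟨(-m).toNat - 1, by omega⟩
    rw [Ysys, if_neg hm.not_ge, hs, VY_succ]
    exact ZY_mem_laurentSubring hA s (-ε) j

/-- In the `Y`-system associated with a symmetrizable generalized
Cartan matrix `A` with bipartite Coxeter graph, every `y_{j;m}` with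
`ε j = (−1)^{m−1}` is an integer Laurent polynomial in the initial data. -/
theorem Y_system_laurent_phenomenon (n : ℕ)
    (A : Matrix (Fin n) (Fin n) ℤ)
    (hdiag : ∀ i, A i i = 2) (hoff : ∀ i j, i ≠ j → A i j ≤ 0)
    (d : Fin n → ℤ) (hd : ∀ i, 0 < d i)
    (hsym : ∀ i j, d i * A i j = d j * A j i)
    (ε : Fin n → ℤˣ) (hbip : ∀ i j, A i j < 0 → ε i = -ε j) :
    ∀ (m : ℤ) (j : Fin n), ε j = (-1 : ℤˣ) ^ (m - 1) →
      Ysys A ε m j ∈ Subring.closure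
        (Set.range (uv n) ∪ Set.range (fun j => (uv n j)⁻¹)) :=
  Y_system_laurent_phenomenon_general n A d hd hsym ε
end
end
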